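/- arXiv:1504.00726 — 5 statements merged into one kernel-verified Lean document; each statement's English description precedes it below -/
import Mathlib

section
/- Let Π ⊆ ℝⁿ, ω : Π → ℝⁿ and Ω : Π → ℝ be C¹ with rank(∂_ξ ω) = n and |Ω(ξ)| ≥ c > 0 for all ξ ∈ Π. Let U = (ω, Ω)ᵀ ∈ ℝ^{n+1} and suppose the (n+1)×(n+1) matrix A(ξ) = (∂_{ξ₁}U, …, ∂_{ξₙ}U, U) has rank n+1 for all ξ ∈ Π. Then the map ω̃ = ω/Ω satisfies rank(∂_ξ ω̃) = n for all ξ ∈ Π. -/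
lemma aux_full_rank_inj {m : ℕ} (A : Matrix (Fin m) (Fin m) ℝ) (h : A.rank = m) :
    Function.Injective A.mulVec := by
  have h' : Module.finrank ℝ (LinearMap.range A.mulVecLin) = Module.finrank ℝ (Fin m → ℝ) := by
    rw [Matrix.rank] at h
    simp [h, Module.finrank_fin_fun]
  have htop : LinearMap.range A.mulVecLin = ⊤ := Submodule.eq_top_of_finrank_eq h'
  have hinj : Function.Injective A.mulVecLin :=
    LinearMap.injective_iff_surjective.mpr (LinearMap.range_eq_top.mp htop)
  intro x y hxy
  exact hinj (by simpa [Matrix.mulVecLin_apply] using hxy)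

lemma aux_clm_apply {m : ℕ} (L : (Fin m → ℝ) →L[ℝ] ℝ) (v : Fin m → ℝ) :
    L v = ∑ j, v j * L (Pi.single j 1) := by
  have hv : v = ∑ j, v j • (Pi.single j 1 : Fin m → ℝ) := by
    ext k
    simp [Pi.single_apply]
  conv_lhs => rw [hv]
  rw [map_sum]
  simp [smul_eq_mul]

/-- If ω : ℝⁿ → ℝⁿ and Ω : ℝⁿ → ℝ are C¹ on the domain `Dom ⊆ ℝⁿ` with
rank(∂ξω) = n, |Ω| ≥ c > 0, and the (n+1)×(n+1) matrix A(ξ) = (∂_{ξ₁}U,…,∂_{ξₙ}U, U)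
with U = (ω,Ω)ᵀ has rank n+1 on Dom, then ω̃ = ω/Ω has Jacobian of rank n on Dom. -/
theorem stmt0 (n : ℕ) (Dom : Set (Fin n → ℝ))
    (ω : (Fin n → ℝ) → (Fin n → ℝ)) (Ω : (Fin n → ℝ) → ℝ)
    (hω : ContDiff ℝ 1 ω) (hΩ : ContDiff ℝ 1 Ω)
    (c : ℝ) (hc : 0 < c) (hΩc : ∀ ξ ∈ Dom, c ≤ |Ω ξ|)
    (hrankω : ∀ ξ ∈ Dom,
      (Matrix.of fun (i j : Fin n) => fderiv ℝ ω ξ (Pi.single j 1) i).rank = n)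
    (U : (Fin n → ℝ) → Fin (n + 1) → ℝ)
    (hU : ∀ ξ, U ξ = Fin.snoc (ω ξ) (Ω ξ))
    (hrankA : ∀ ξ ∈ Dom,
      (Matrix.of fun (i j : Fin (n + 1)) =>
        Fin.snoc (fun j' : Fin n => fderiv ℝ (fun x => U x i) ξ (Pi.single j' 1))
          (U ξ i) j).rank = n + 1) :
    ∀ ξ ∈ Dom,
      (Matrix.of fun (i j : Fin n) =>
        fderiv ℝ (fun x => ω x i / Ω x) ξ (Pi.single j 1)).rank = n := by
  intro ξ hξ
  have hΩ0 : Ω ξ ≠ 0 := by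
    intro h
    have := hΩc ξ hξ
    rw [h, abs_zero] at this
    linarith
  have hdω : ∀ i, DifferentiableAt ℝ (fun x => ω x i) ξ :=
    fun i => ((contDiff_pi.mp hω i).differentiable one_ne_zero).differentiableAt
  have hdΩ : DifferentiableAt ℝ Ω ξ := (hΩ.differentiable one_ne_zero).differentiableAt
  have hdg : ∀ i, DifferentiableAt ℝ (fun x => ω x i / Ω x) ξ := by
    intro i
    simp only [div_eq_mul_inv]
    exact (hdω i).mul (hdΩ.inv hΩ0)
  set B : Matrix (Fin n) (Fin n) ℝ :=
    Matrix.of fun (i j : Fin n) => fderiv ℝ (fun x => ω x i / Ω x) ξ (Pi.single j 1) with hBdef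
  set A : Matrix (Fin (n + 1)) (Fin (n + 1)) ℝ :=
    Matrix.of fun (i j : Fin (n + 1)) =>
      @Fin.snoc n (fun _ => ℝ) (fun j' : Fin n => fderiv ℝ (fun x => U x i) ξ (Pi.single j' 1))
        (U ξ i) j with hAdef
  have hAinj : Function.Injective A.mulVec := aux_full_rank_inj A (hrankA ξ hξ)
  -- product rule identity
  have hprod : ∀ i, fderiv ℝ (fun x => ω x i) ξ
      = (ω ξ i / Ω ξ) • fderiv ℝ Ω ξ + Ω ξ • fderiv ℝ (fun x => ω x i / Ω x) ξ := by
    intro i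
    have hev : (fun x => (ω x i / Ω x) * Ω x) =ᶠ[nhds ξ] (fun x => ω x i) :=
      (hΩ.continuous.continuousAt.eventually_ne hΩ0).mono fun x hx => div_mul_cancel₀ _ hx
    rw [← hev.fderiv_eq, fderiv_fun_mul (hdg i) hdΩ]
  -- kernel of B is trivial
  have hker : ∀ v : Fin n → ℝ, B.mulVec v = 0 → v = 0 := by
    intro v hv
    set lam : ℝ := fderiv ℝ Ω ξ v / Ω ξ with hlam
    set w : Fin (n + 1) → ℝ := Fin.snoc v (-lam) with hw
    have hgv : ∀ i, fderiv ℝ (fun x => ω x i / Ω x) ξ v = 0 := by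
      intro i
      have := congrFun hv i
      rw [aux_clm_apply]
      simpa [Matrix.mulVec, dotProduct, hBdef, mul_comm] using this
    have homega : ∀ i, fderiv ℝ (fun x => ω x i) ξ v = lam * ω ξ i := by
      intro i
      have := congrArg (fun (L : (Fin n → ℝ) →L[ℝ] ℝ) => L v) (hprod i)
      simp only [ContinuousLinearMap.add_apply, ContinuousLinearMap.coe_smul',
        Pi.smul_apply, smul_eq_mul] at this
      rw [this, hgv i, hlam]
      field_simp
      ring
    have hAw : A.mulVec w = 0 := by
      funext i
      have hsum : A.mulVec w i
          = (∑ j : Fin n, fderiv ℝ (fun x => U x i) ξ (Pi.single j 1) * v j)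
            + U ξ i * (-lam) := by
        simp only [Matrix.mulVec, dotProduct, hAdef, Matrix.of_apply]
        rw [Fin.sum_univ_castSucc]
        simp [hw]
      rw [hsum]
      induction i using Fin.lastCases with
      | last =>
        have hUi : (fun x => U x (Fin.last n)) = Ω := by
          funext x; rw [hU]; simp
        rw [hUi, hU]
        have : (∑ j : Fin n, fderiv ℝ Ω ξ (Pi.single j 1) * v j) = fderiv ℝ Ω ξ v := by
          rw [aux_clm_apply]; exact Finset.sum_congr rfl fun j _ => mul_comm _ _
        rw [this]
        simp only [Fin.snoc_last, Pi.zero_apply]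
        rw [hlam]
        field_simp
        ring
      | cast i' =>
        have hUi : (fun x => U x (Fin.castSucc i')) = fun x => ω x i' := by
          funext x; rw [hU]; simp
        rw [hUi, hU]
        have : (∑ j : Fin n, fderiv ℝ (fun x => ω x i') ξ (Pi.single j 1) * v j)
            = fderiv ℝ (fun x => ω x i') ξ v := by
          rw [aux_clm_apply]; exact Finset.sum_congr rfl fun j _ => mul_comm _ _
        rw [this, homega i']
        simp only [Fin.snoc_castSucc, Pi.zero_apply]
        ring
    have hw0 : w = 0 := hAinj (by rw [hAw, Matrix.mulVec_zero])
    funext j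
    have := congrFun hw0 (Fin.castSucc j)
    simpa [hw, Fin.snoc_castSucc] using this
  have hinj : Function.Injective B.mulVec := by
    intro x y hxy
    have : B.mulVec (x - y) = 0 := by
      rw [Matrix.mulVec_sub, hxy, sub_self]
    exact sub_eq_zero.mp (hker _ this)
  have := Matrix.rank_of_isUnit B (Matrix.mulVec_injective_iff_isUnit.mp hinj)
  simpa using this
end

section
/- Let ω₀ = (ω₀₁, ω₀₂) satisfy the Diophantine condition |⟨k, ω₀⟩| ≥ α/|k|^τ for all k ∈ ℤ²∖{0}, and let ω_*(ε) = ω₀ + ω̂(ε) where ω̂ : [0, ε₀] → ℝ² is continuous with ω̂(0) = 0. Then there exists a non-empty set I*_{ε₀} ⊆ [0, ε₀] of at least continuum cardinality such that for every ε ∈ I*_{ε₀}, |⟨k, ω_*(ε)⟩| ≥ α/(2|k|^{2τ+2}) for all k ∈ ℤ²∖{0}. Moreover, if ω̂ is C¹ on [0, ε₀] with ‖ω̂‖_{C¹} ≤ c, then I*_{ε₀} has positive Lebesgue measure. -/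
/-!
Write `ω⋆(ε) = ω₀ + ω̂(ε) = (u, v)`. Since `|ω₀ i| ≥ α` (take `k` a unit vector), a perturbation
of size `α / 2` keeps `u` and `v` away from zero, and for `k₀ k₁ ≠ 0` the small divisor
`k₀ u + k₁ v` equals `|u| |k₁|` times the distance from the ratio `v / u` to `-k₀ / k₁`. So `ω⋆(ε)`
satisfies the weaker Diophantine condition as soon as `v / u` avoids the intervals around `-k₀ / k₁`
of radius `α / (|ω₀ 0| |k₁| |k|^(2τ+2))`.

If the ratio is constant, `ω⋆(ε)` is a multiple of `ω₀` and every small `ε` works. Otherwise the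
ratio sweeps an interval of length `h` starting at `ω₀ 1 / ω₀ 0`. This point is itself Diophantine,
so only resonances with `|k|^(τ+1) ≳ 1/h` meet the interval, and Rankin's trick bounds their total
length by `O(h^θ)` with `θ > 1`. For small `h` a closed set of positive measure is left over. Such a
set has the cardinality of the continuum, and so has its preimage. When `ω̂` is `C¹`, the ratio is
Lipschitz, so the preimage also has positive measure.
-/

open MeasureTheory Set Filter Topology Metric

def IsDiophantine {ι : Type*} [Fintype ι] (C τ : ℝ) (ω : ι → ℝ) : Prop :=
  ∀ k : ι → ℤ, k ≠ 0 → C / (∑ i, |(k i : ℝ)|) ^ τ ≤ |∑ i, (k i : ℝ) * ω i|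

section Diophantine

variable {ι : Type*} [Fintype ι]

lemma one_le_sum_abs_intCast {k : ι → ℤ} (hk : k ≠ 0) : 1 ≤ ∑ i, |(k i : ℝ)| := by
  obtain ⟨i, hi⟩ := Function.ne_iff.mp hk
  calc (1 : ℝ) ≤ |(k i : ℝ)| := by exact_mod_cast Int.one_le_abs hi
    _ ≤ ∑ j, |(k j : ℝ)| :=
      Finset.single_le_sum (f := fun j ↦ |(k j : ℝ)|) (fun j _ ↦ abs_nonneg _) (Finset.mem_univ i)

lemma IsDiophantine.le_abs_apply [DecidableEq ι] {C τ : ℝ} {ω : ι → ℝ} (h : IsDiophantine C τ ω)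
    (i : ι) : C ≤ |ω i| := by
  simpa [Pi.single_apply, apply_ite] using h (Pi.single i 1) (by simp)

lemma IsDiophantine.mono {C C' τ τ' : ℝ} {ω : ι → ℝ} (h : IsDiophantine C τ ω) (hC' : 0 ≤ C')
    (hC : C' ≤ C) (hτ : τ ≤ τ') : IsDiophantine C' τ' ω := fun k hk ↦ by
  have hN := one_le_sum_abs_intCast hk
  refine le_trans (div_le_div₀ (hC'.trans hC) hC (by positivity) ?_) (h k hk)
  exact Real.rpow_le_rpow_of_exponent_le hN hτ

lemma IsDiophantine.smul {C τ : ℝ} {ω : ι → ℝ} (h : IsDiophantine C τ ω) (c : ℝ) :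
    IsDiophantine (|c| * C) τ (c • ω) := fun k hk ↦ by
  have hsum : ∑ i, (k i : ℝ) * (c • ω) i = c * ∑ i, (k i : ℝ) * ω i := by
    simp only [Pi.smul_apply, smul_eq_mul, Finset.mul_sum, mul_left_comm]
  rw [hsum, abs_mul, mul_div_assoc]
  exact mul_le_mul_of_nonneg_left (h k hk) (abs_nonneg c)

end Diophantine

noncomputable def resonanceRadius (c σ : ℝ) (k : Fin 2 → ℤ) : ℝ :=
  c / (|(k 1 : ℝ)| * (∑ i, |(k i : ℝ)|) ^ σ)

def resonantSlopes (c σ : ℝ) : Set ℝ :=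
  ⋃ (k : Fin 2 → ℤ) (_ : k 0 ≠ 0 ∧ k 1 ≠ 0), ball (-(k 0 : ℝ) / k 1) (resonanceRadius c σ k)

lemma isOpen_resonantSlopes (c σ : ℝ) : IsOpen (resonantSlopes c σ) :=
  isOpen_iUnion fun _ ↦ isOpen_iUnion fun _ ↦ isOpen_ball

lemma abs_add_mul_eq_mul_dist {x : Fin 2 → ℝ} {k : Fin 2 → ℤ} (hx : x 0 ≠ 0) (hk : k 1 ≠ 0) :
    |(k 0 : ℝ) * x 0 + k 1 * x 1| = |x 0| * |(k 1 : ℝ)| * dist (x 1 / x 0) (-(k 0 : ℝ) / k 1) := by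
  have hk' : (k 1 : ℝ) ≠ 0 := by exact_mod_cast hk
  rw [Real.dist_eq, ← abs_mul, ← abs_mul]
  congr 1
  field_simp
  ring

lemma dist_lt_resonanceRadius_iff {c σ : ℝ} {x : Fin 2 → ℝ} {k : Fin 2 → ℤ} (hx : x 0 ≠ 0)
    (hk : k 1 ≠ 0) :
    dist (x 1 / x 0) (-(k 0 : ℝ) / k 1) < resonanceRadius c σ k ↔
      |(k 0 : ℝ) * x 0 + k 1 * x 1| < |x 0| * c / (∑ i, |(k i : ℝ)|) ^ σ := by
  have hk' : 0 < |(k 1 : ℝ)| := abs_pos.mpr (by exact_mod_cast hk)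
  have hN : 0 < ∑ i, |(k i : ℝ)| :=
    hk'.trans_le (Finset.single_le_sum (f := fun i ↦ |(k i : ℝ)|) (fun i _ ↦ abs_nonneg _)
      (Finset.mem_univ 1))
  have hr : |x 0| * |(k 1 : ℝ)| * resonanceRadius c σ k = |x 0| * c / (∑ i, |(k i : ℝ)|) ^ σ := by
    rw [resonanceRadius]
    field_simp
  rw [abs_add_mul_eq_mul_dist hx hk, ← hr]
  exact (mul_lt_mul_iff_of_pos_left (mul_pos (abs_pos.mpr hx) hk')).symm

lemma IsDiophantine.div_notMem_resonantSlopes {C τ : ℝ} {ω : Fin 2 → ℝ} (h : IsDiophantine C τ ω)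
    (hω : ω 0 ≠ 0) : ω 1 / ω 0 ∉ resonantSlopes (C / |ω 0|) τ := by
  simp only [resonantSlopes, mem_iUnion, mem_ball, not_exists, not_lt]
  intro k hk
  rw [← not_lt, dist_lt_resonanceRadius_iff hω hk.2, mul_div_cancel₀ _ (abs_ne_zero.mpr hω), not_lt]
  simpa [Fin.sum_univ_two] using h k (fun h0 ↦ hk.1 (by simp [h0]))

lemma isDiophantine_of_div_notMem_resonantSlopes {C m σ : ℝ} {x : Fin 2 → ℝ} (hC : 0 ≤ C)
    (hm : 0 < m) (hσ : 0 ≤ σ) (hx₀ : m ≤ |x 0|) (hx : ∀ i, C ≤ |x i|)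
    (h : x 1 / x 0 ∉ resonantSlopes (C / m) σ) : IsDiophantine C σ x := by
  intro k hk
  have hN := one_le_sum_abs_intCast hk
  have hCN : C / (∑ i, |(k i : ℝ)|) ^ σ ≤ C := div_le_self hC (Real.one_le_rpow hN hσ)
  have hcoord : ∀ i, k i ≠ 0 → C ≤ |(k i : ℝ) * x i| := fun i hi ↦ by
    rw [abs_mul]
    exact (hx i).trans (le_mul_of_one_le_left (abs_nonneg _) (by exact_mod_cast Int.one_le_abs hi))
  rw [Fin.sum_univ_two (fun i ↦ (k i : ℝ) * x i)]
  by_cases h1 : k 1 = 0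
  · have h0 : k 0 ≠ 0 := fun h0 ↦ hk (by ext i; fin_cases i <;> simp [h0, h1])
    simpa [h1] using hCN.trans (hcoord 0 h0)
  by_cases h0 : k 0 = 0
  · simpa [h0] using hCN.trans (hcoord 1 h1)
  have hx0 : x 0 ≠ 0 := abs_pos.mp (hm.trans_le hx₀)
  simp only [resonantSlopes, mem_iUnion, mem_ball, not_exists, not_lt] at h
  have hres := (dist_lt_resonanceRadius_iff hx0 h1).not.mp (not_lt.mpr (h k ⟨h0, h1⟩))
  refine le_trans ?_ (not_lt.mp hres)
  gcongr
  rw [mul_div_assoc', le_div_iff₀ hm, mul_comm]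
  gcongr

lemma resonanceRadius_add {c σ σ' : ℝ} {k : Fin 2 → ℤ} (hN : 0 < ∑ i, |(k i : ℝ)|) :
    resonanceRadius c (σ + σ') k = resonanceRadius c σ k * (∑ i, |(k i : ℝ)|) ^ (-σ') := by
  rw [resonanceRadius, resonanceRadius, Real.rpow_add hN, Real.rpow_neg hN.le]
  ring

lemma resonanceRadius_le_of_dist_le {c τ θ h p₀ y : ℝ} {k : Fin 2 → ℤ} (hc : 0 < c) (hτ : 0 ≤ τ)
    (hθ : 1 ≤ θ) (hk : k 0 ≠ 0 ∧ k 1 ≠ 0)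
    (hp₀ : resonanceRadius c τ k ≤ dist p₀ (-(k 0 : ℝ) / k 1)) (hy : dist y p₀ ≤ h)
    (hyk : dist y (-(k 0 : ℝ) / k 1) < resonanceRadius c (2 * τ + 2) k) :
    resonanceRadius c (2 * τ + 2) k ≤
      c ^ (1 - θ) * (2 * h) ^ θ * (∑ i, |(k i : ℝ)|) ^ ((τ + 1) * (θ - 1) - (τ + 2)) := by
  set N := ∑ i, |(k i : ℝ)| with hN
  set d := resonanceRadius c τ k with hd
  have hk0 : (1 : ℝ) ≤ |(k 0 : ℝ)| := by exact_mod_cast Int.one_le_abs hk.1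
  have hk1 : (1 : ℝ) ≤ |(k 1 : ℝ)| := by exact_mod_cast Int.one_le_abs hk.2
  have hN2 : 2 ≤ N := by rw [hN, Fin.sum_univ_two]; linarith
  have hN0 : 0 < N := by linarith
  have hd0 : 0 < d := by rw [hd, resonanceRadius]; positivity
  have hr : resonanceRadius c (2 * τ + 2) k = d * N ^ (-(τ + 2)) := by
    rw [show 2 * τ + 2 = τ + (τ + 2) by ring, resonanceRadius_add hN0]
  have hNhalf : N ^ (-(τ + 2)) ≤ 1 / 2 := by
    rw [Real.rpow_neg hN0.le, one_div]
    refine inv_anti₀ two_pos (hN2.trans ?_)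
    simpa using Real.rpow_le_rpow_of_exponent_le (by linarith) (by linarith : (1 : ℝ) ≤ τ + 2)
  have hd2h : d ≤ 2 * h := by
    have := dist_triangle p₀ y (-(k 0 : ℝ) / k 1)
    rw [dist_comm] at hy
    nlinarith
  have hdlow : c / N ^ (τ + 1) ≤ d := by
    rw [hd, resonanceRadius, Real.rpow_add_one hN0.ne', mul_comm _ N]
    gcongr
    rw [hN, Fin.sum_univ_two]
    linarith [abs_nonneg (k 0 : ℝ)]
  calc resonanceRadius c (2 * τ + 2) k = d ^ (1 - θ) * d ^ θ * N ^ (-(τ + 2)) := by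
        rw [hr, ← Real.rpow_add hd0, sub_add_cancel, Real.rpow_one]
    _ ≤ (c / N ^ (τ + 1)) ^ (1 - θ) * (2 * h) ^ θ * N ^ (-(τ + 2)) := by
        have h1 := Real.rpow_le_rpow_of_nonpos (by positivity) hdlow (by linarith : 1 - θ ≤ 0)
        have h2 := Real.rpow_le_rpow hd0.le hd2h (by linarith : 0 ≤ θ)
        gcongr ?_ * ?_ * _
    _ = c ^ (1 - θ) * (2 * h) ^ θ * N ^ ((τ + 1) * (θ - 1) - (τ + 2)) := by
        rw [Real.div_rpow hc.le (by positivity), ← Real.rpow_mul hN0.le, Real.rpow_sub hN0,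
          show (τ + 1) * (θ - 1) = -((τ + 1) * (1 - θ)) by ring, Real.rpow_neg hN0.le,
          Real.rpow_neg hN0.le]
        ring

lemma norm_le_sum_abs_intCast (k : Fin 2 → ℤ) : ‖k‖ ≤ ∑ i, |(k i : ℝ)| :=
  (pi_norm_le_iff_of_nonneg (by positivity)).mpr fun i ↦ by
    rw [Int.norm_eq_abs]
    exact Finset.single_le_sum (f := fun j ↦ |(k j : ℝ)|) (fun j _ ↦ abs_nonneg _)
      (Finset.mem_univ i)

lemma volume_closedBall_inter_resonantSlopes_le {c τ p₀ : ℝ} (hc : 0 < c) (hτ : 0 < τ)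
    (hp₀ : p₀ ∉ resonantSlopes c τ) :
    ∃ θ : ℝ, 1 < θ ∧ ∃ K : ℝ, ∀ h, 0 ≤ h →
      volume (closedBall p₀ h ∩ resonantSlopes c (2 * τ + 2)) ≤ ENNReal.ofReal (K * h ^ θ) := by
  -- any `θ ∈ (1, 1 + τ / (τ + 1))` pushes the exponent of `|k|` below `-2`
  set θ := 1 + τ / (2 * τ + 2)
  set s := τ / 2 + 2
  have hθ : 1 < θ := by simp only [θ]; linarith [show 0 < τ / (2 * τ + 2) by positivity]
  have hexp : (τ + 1) * (θ - 1) - (τ + 2) = -s := by simp only [θ, s]; field_simp; ring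
  have hsum := EisensteinSeries.summable_one_div_norm_rpow (show 2 < s by simp only [s]; linarith)
  simp only [resonantSlopes, mem_iUnion, mem_ball, not_exists, not_lt] at hp₀
  set K := 2 * c ^ (1 - θ) * 2 ^ θ
  refine ⟨θ, hθ, K * ∑' k : Fin 2 → ℤ, ‖k‖ ^ (-s), fun h hh ↦ ?_⟩
  have hpiece : ∀ k : Fin 2 → ℤ, volume (closedBall p₀ h ∩ ⋃ (_ : k 0 ≠ 0 ∧ k 1 ≠ 0),
      ball (-(k 0 : ℝ) / k 1) (resonanceRadius c (2 * τ + 2) k)) ≤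
        ENNReal.ofReal (K * h ^ θ * ‖k‖ ^ (-s)) := by
    intro k
    obtain he | ⟨y, hy, hyk⟩ := eq_empty_or_nonempty (closedBall p₀ h ∩
      ⋃ (_ : k 0 ≠ 0 ∧ k 1 ≠ 0), ball (-(k 0 : ℝ) / k 1) (resonanceRadius c (2 * τ + 2) k))
    · simp [he]
    obtain ⟨hk, hyk⟩ := mem_iUnion.mp hyk
    have hrk := resonanceRadius_le_of_dist_le hc hτ.le hθ.le hk (hp₀ k hk)
      (mem_closedBall.mp hy) (mem_ball.mp hyk)
    rw [hexp, Real.mul_rpow two_pos.le hh] at hrk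
    have hnorm : (∑ i, |(k i : ℝ)|) ^ (-s) ≤ ‖k‖ ^ (-s) :=
      Real.rpow_le_rpow_of_nonpos (norm_pos_iff.mpr fun h0 ↦ hk.1 (by simp [h0]))
        (norm_le_sum_abs_intCast k) (by simp only [s]; linarith)
    calc _ ≤ volume (ball (-(k 0 : ℝ) / k 1) (resonanceRadius c (2 * τ + 2) k)) :=
          measure_mono (inter_subset_right.trans (iUnion_subset fun _ ↦ subset_rfl))
      _ = ENNReal.ofReal (2 * resonanceRadius c (2 * τ + 2) k) := Real.volume_ball _ _
      _ ≤ ENNReal.ofReal (K * h ^ θ * ‖k‖ ^ (-s)) := by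
        refine ENNReal.ofReal_le_ofReal ?_
        calc 2 * resonanceRadius c (2 * τ + 2) k
            ≤ 2 * (c ^ (1 - θ) * (2 ^ θ * h ^ θ) * (∑ i, |(k i : ℝ)|) ^ (-s)) := by gcongr
          _ = K * h ^ θ * (∑ i, |(k i : ℝ)|) ^ (-s) := by ring
          _ ≤ K * h ^ θ * ‖k‖ ^ (-s) := by gcongr
  calc volume (closedBall p₀ h ∩ resonantSlopes c (2 * τ + 2))
      ≤ ∑' k : Fin 2 → ℤ, volume (closedBall p₀ h ∩ ⋃ (_ : k 0 ≠ 0 ∧ k 1 ≠ 0),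
          ball (-(k 0 : ℝ) / k 1) (resonanceRadius c (2 * τ + 2) k)) := by
        rw [resonantSlopes, inter_iUnion]
        exact measure_iUnion_le _
    _ ≤ ∑' k : Fin 2 → ℤ, ENNReal.ofReal (K * h ^ θ * ‖k‖ ^ (-s)) := ENNReal.tsum_le_tsum hpiece
    _ = ENNReal.ofReal (K * (∑' k : Fin 2 → ℤ, ‖k‖ ^ (-s)) * h ^ θ) := by
        rw [← ENNReal.ofReal_tsum_of_nonneg (fun k ↦ by positivity) (hsum.mul_left _),
          tsum_mul_left]
        ring_nf

lemma eventually_volume_closedBall_inter_resonantSlopes_lt {c τ p₀ : ℝ} (hc : 0 < c) (hτ : 0 < τ)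
    (hp₀ : p₀ ∉ resonantSlopes c τ) :
    ∀ᶠ h in 𝓝[>] 0, volume (closedBall p₀ h ∩ resonantSlopes c (2 * τ + 2)) < ENNReal.ofReal h := by
  obtain ⟨θ, hθ, K, hK⟩ := volume_closedBall_inter_resonantSlopes_le hc hτ hp₀
  have hlim : Tendsto (fun h : ℝ ↦ K * h ^ (θ - 1)) (𝓝[>] 0) (𝓝 0) := by
    have := ((Real.continuousAt_rpow_const 0 (θ - 1) (Or.inr (by linarith))).const_mul K).tendsto
    simpa [Real.zero_rpow (by linarith : θ - 1 ≠ 0)] using this.mono_left nhdsWithin_le_nhds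
  filter_upwards [self_mem_nhdsWithin, hlim.eventually_lt_const one_pos] with h (hh : 0 < h) hKh
  refine (hK h hh.le).trans_lt ((ENNReal.ofReal_lt_ofReal_iff hh).mpr ?_)
  calc K * h ^ θ = K * h ^ (θ - 1) * h := by
        rw [mul_assoc, ← Real.rpow_add_one hh.ne', sub_add_cancel]
    _ < 1 * h := by gcongr
    _ = h := one_mul h

lemma continuum_le_mk_of_isClosed {X : Type*} [TopologicalSpace X] [PolishSpace X]
    [MeasurableSpace X] {μ : Measure X} [NullSingletonClass μ] {V : Set X} (hV : IsClosed V)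
    (hμ : μ V ≠ 0) :
    Cardinal.continuum ≤ Cardinal.mk V := by
  obtain ⟨f, hfV, -, hf⟩ :=
    hV.exists_nat_bool_injection_of_not_countable fun hc ↦ hμ (hc.measure_zero μ)
  have hinj : Function.Injective (fun b ↦ (⟨f b, hfV (mem_range_self b)⟩ : V)) :=
    fun b b' hb ↦ hf (congrArg Subtype.val hb)
  simpa [Cardinal.mk_arrow, Cardinal.two_power_aleph0] using
    Cardinal.lift_mk_le_lift_mk_of_injective hinj

lemma LipschitzOnWith.volume_image_le {f : ℝ → ℝ} {K : NNReal} {s : Set ℝ}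
    (hf : LipschitzOnWith K f s) : volume (f '' s) ≤ K * volume s := by
  simpa [hausdorffMeasure_real] using hf.hausdorffMeasure_image_le zero_le_one

lemma exists_subset_Icc_isClosed_image_notMem {f : ℝ → ℝ} {a b : ℝ} {A : Set ℝ} (hab : a ≤ b)
    (hf : ContinuousOn f (Icc a b)) (hfb : f b ≠ f a) (hA : IsOpen A)
    (hsmall : ∀ᶠ h in 𝓝[>] 0, volume (closedBall (f a) h ∩ A) < ENNReal.ofReal h) :
    ∃ S ⊆ Icc a b, IsClosed (f '' S) ∧ volume (f '' S) ≠ 0 ∧ ∀ t ∈ S, f t ∉ A := by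
  obtain ⟨h, hsm, hpos, hlt⟩ :=
    (hsmall.and (Ioo_mem_nhdsGT (abs_pos.mpr (sub_ne_zero.mpr hfb)))).exists
  obtain ⟨t, ht, hft⟩ : ∃ t ∈ Icc a b, |f t - f a| = h := by
    simpa using intermediate_value_Icc hab (hf.sub continuousOn_const).abs
      (show h ∈ Icc |f a - f a| |f b - f a| by simp [hpos.le, hlt.le])
  set J := uIcc (f a) (f t)
  have hJ : volume J = ENNReal.ofReal h := by rw [Real.volume_interval, hft]
  have hJball : J ⊆ closedBall (f a) h := fun y hy ↦ by
    rw [mem_closedBall, Real.dist_eq, ← hft]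
    exact abs_sub_left_of_mem_uIcc hy
  have himage : f '' (Icc a t ∩ f ⁻¹' (J \ A)) = J \ A := by
    rw [image_inter_preimage, inter_eq_right, ← uIcc_of_le ht.1]
    refine sdiff_subset.trans (intermediate_value_uIcc (hf.mono ?_))
    rw [uIcc_of_le ht.1]
    exact Icc_subset_Icc_right ht.2
  refine ⟨Icc a t ∩ f ⁻¹' (J \ A), inter_subset_left.trans (Icc_subset_Icc_right ht.2), ?_, ?_,
    fun s hs ↦ hs.2.2⟩
  · rw [himage]
    exact isClosed_Icc.sdiff hA
  · rw [himage]
    intro h0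
    have := measure_le_inter_add_sdiff volume J A
    rw [h0, add_zero, hJ] at this
    exact (this.trans (measure_mono (inter_subset_inter_left A hJball))).not_gt hsm

lemma exists_subset_Icc_continuum_le_mk_notMem {f : ℝ → ℝ} {a b : ℝ} {A : Set ℝ} (hab : a ≤ b)
    (hf : ContinuousOn f (Icc a b)) (hfb : f b ≠ f a) (hA : IsOpen A)
    (hsmall : ∀ᶠ h in 𝓝[>] 0, volume (closedBall (f a) h ∩ A) < ENNReal.ofReal h) :
    ∃ S ⊆ Icc a b, Cardinal.continuum ≤ Cardinal.mk S ∧ (∀ t ∈ S, f t ∉ A) ∧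
      (ContDiffOn ℝ 1 f (Icc a b) → 0 < volume S) := by
  obtain ⟨S, hS, hclosed, hvol, hA⟩ := exists_subset_Icc_isClosed_image_notMem hab hf hfb hA hsmall
  refine ⟨S, hS, (continuum_le_mk_of_isClosed hclosed hvol).trans Cardinal.mk_image_le, hA,
    fun hC1 ↦ pos_iff_ne_zero.mpr fun h0 ↦ hvol ?_⟩
  obtain ⟨K, hK⟩ := hC1.exists_lipschitzOnWith one_ne_zero (convex_Icc a b) isCompact_Icc
  simpa [h0] using (hK.mono hS).volume_image_le

lemma IsDiophantine.of_div_eq {C τ : ℝ} {ω x : Fin 2 → ℝ} (h : IsDiophantine C τ ω) (hC : 0 ≤ C)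
    (hω : ω 0 ≠ 0) (hx : |ω 0| / 2 ≤ |x 0|) (hdiv : x 1 / x 0 = ω 1 / ω 0) :
    IsDiophantine (C / 2) τ x := by
  have hx0 : x 0 ≠ 0 := abs_pos.mp ((by positivity : 0 < |ω 0| / 2).trans_le hx)
  have hxω : x = (x 0 / ω 0) • ω := by
    refine funext (Fin.forall_fin_two.mpr ⟨?_, ?_⟩)
    · simp [div_mul_cancel₀ _ hω]
    · rw [div_eq_div_iff hx0 hω] at hdiv
      simp only [Pi.smul_apply, smul_eq_mul]
      field_simp
      linarith
  rw [hxω]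
  refine (h.smul _).mono (by positivity) ?_ le_rfl
  rw [abs_div, div_mul_eq_mul_div, le_div_iff₀ (abs_pos.mpr hω)]
  nlinarith

theorem exists_isDiophantine_subset_of_perturbation {α τ δ : ℝ} (hα : 0 < α) (hτ : 0 < τ)
    (hδ : 0 < δ) {ω₀ : Fin 2 → ℝ} (hω₀ : IsDiophantine α τ ω₀) {x : ℝ → Fin 2 → ℝ}
    (hx : ContinuousOn x (Icc 0 δ)) (hx0 : x 0 = ω₀)
    (hclose : ∀ ε ∈ Icc 0 δ, ‖x ε - ω₀‖ ≤ α / 2) :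
    ∃ S ⊆ Icc 0 δ, Cardinal.continuum ≤ Cardinal.mk S ∧
      (∀ ε ∈ S, IsDiophantine (α / 2) (2 * τ + 2) (x ε)) ∧
      (ContDiffOn ℝ 1 x (Icc 0 δ) → 0 < volume S) := by
  have hω : ∀ i, α ≤ |ω₀ i| := hω₀.le_abs_apply
  have hω0 : ω₀ 0 ≠ 0 := abs_pos.mp (hα.trans_le (hω 0))
  have hxω : ∀ ε ∈ Icc 0 δ, ∀ i, |ω₀ i| / 2 ≤ |x ε i| := fun ε hε i ↦ by
    have h1 := (norm_le_pi_norm (x ε - ω₀) i).trans (hclose ε hε)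
    rw [Real.norm_eq_abs, Pi.sub_apply] at h1
    linarith [hω i, abs_sub_abs_le_abs_sub (ω₀ i) (x ε i), abs_sub_comm (ω₀ i) (x ε i)]
  by_cases hconst : ∀ ε ∈ Icc 0 δ, x ε 1 / x ε 0 = ω₀ 1 / ω₀ 0
  · refine ⟨Icc 0 δ, subset_rfl, (Cardinal.mk_Icc_real hδ).ge, fun ε hε ↦ ?_, fun _ ↦ by simp [hδ]⟩
    exact (hω₀.of_div_eq hα.le hω0 (hxω ε hε 0) (hconst ε hε)).mono (by positivity) le_rfl
      (by linarith)
  obtain ⟨ε', hε', hne⟩ := not_forall₂.mp hconst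
  have hx0ne : ∀ ε ∈ Icc 0 ε', x ε 0 ≠ 0 := fun ε hε ↦
    abs_pos.mp ((by positivity : 0 < |ω₀ 0| / 2).trans_le
      (hxω ε (Icc_subset_Icc_right hε'.2 hε) 0))
  have hsub : Icc 0 ε' ⊆ Icc 0 δ := Icc_subset_Icc_right hε'.2
  have hp : ContinuousOn (fun ε ↦ x ε 1 / x ε 0) (Icc 0 ε') :=
    ((continuous_apply 1).comp_continuousOn (hx.mono hsub)).div
      ((continuous_apply 0).comp_continuousOn (hx.mono hsub)) hx0ne
  have hsmall := eventually_volume_closedBall_inter_resonantSlopes_lt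
    (div_pos hα (abs_pos.mpr hω0)) hτ (hω₀.div_notMem_resonantSlopes hω0)
  obtain ⟨S, hS, hcard, hgood, hvol⟩ := exists_subset_Icc_continuum_le_mk_notMem hε'.1 hp
    (by simpa [hx0] using hne) (isOpen_resonantSlopes _ _) (by simpa [hx0] using hsmall)
  refine ⟨S, hS.trans hsub, hcard, fun ε hε ↦ ?_, fun hC1 ↦ hvol ?_⟩
  · refine isDiophantine_of_div_notMem_resonantSlopes (m := |ω₀ 0| / 2) (by positivity)
      (by positivity) (by positivity) (hxω ε (hsub (hS hε)) 0)
      (fun i ↦ (div_le_div_of_nonneg_right (hω i) two_pos.le).trans (hxω ε (hsub (hS hε)) i)) ?_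
    rw [div_div_div_cancel_right₀ two_ne_zero]
    exact hgood ε hε
  · have hC1' := hC1.mono hsub
    exact (contDiffOn_pi.mp hC1' 1).div (contDiffOn_pi.mp hC1' 0) hx0ne

theorem stmt6_general (τ α : ℝ) (hτ : 1 < τ) (hα : 0 < α)
    (ω₀ : Fin 2 → ℝ)
    (hdio : ∀ k : Fin 2 → ℤ, k ≠ 0 →
      α / (∑ i, |(k i : ℝ)|) ^ τ ≤ |∑ i, (k i : ℝ) * ω₀ i|)
    (ε₀ : ℝ) (hε₀ : 0 < ε₀)
    (ωhat : ℝ → Fin 2 → ℝ) (hcont : ContinuousOn ωhat (Set.Icc 0 ε₀))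
    (h0 : ωhat 0 = 0) :
    ∃ S : Set ℝ, S ⊆ Set.Icc 0 ε₀ ∧ S.Nonempty ∧
      Cardinal.continuum ≤ Cardinal.mk S ∧
      (∀ ε ∈ S, ∀ k : Fin 2 → ℤ, k ≠ 0 →
        α / (2 * (∑ i, |(k i : ℝ)|) ^ (2 * τ + 2))
          ≤ |∑ i, (k i : ℝ) * (ω₀ i + ωhat ε i)|) ∧
      (ContDiffOn ℝ 1 ωhat (Set.Icc 0 ε₀) → 0 < volume S) := by
  have hsmall : ∀ᶠ ε in 𝓝[≥] 0, ε ∈ Icc 0 ε₀ ∧ ‖ωhat ε‖ ≤ α / 2 := by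
    have hlim := hcont 0 ⟨le_rfl, hε₀.le⟩
    rw [ContinuousWithinAt, h0, nhdsWithin_Icc_eq_nhdsGE hε₀] at hlim
    exact (show ∀ᶠ ε in 𝓝[≥] 0, ε ∈ Icc 0 ε₀ from Icc_mem_nhdsGE hε₀).and
      (hlim.norm.eventually (ge_mem_nhds (by simpa using hα)))
  obtain ⟨δ, hδ, hδsub⟩ := mem_nhdsGE_iff_exists_Icc_subset.mp hsmall
  have hδε₀ : Icc 0 δ ⊆ Icc 0 ε₀ := fun ε hε ↦ (hδsub hε).1
  obtain ⟨S, hS, hcard, hdioS, hvol⟩ := exists_isDiophantine_subset_of_perturbation hα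
    (by linarith) hδ hdio (x := fun ε ↦ ω₀ + ωhat ε)
    (continuousOn_const.add (hcont.mono hδε₀)) (by simp [h0])
    (fun ε hε ↦ by simpa using (hδsub hε).2)
  refine ⟨S, hS.trans hδε₀, ?_, hcard, fun ε hε k hk ↦ ?_, fun hC1 ↦ hvol ?_⟩
  · exact nonempty_coe_sort.mp (Cardinal.mk_ne_zero_iff.mp
      (ne_bot_of_le_ne_bot Cardinal.continuum_ne_zero hcard))
  · simpa [div_div] using hdioS ε hε k hk
  · exact contDiffOn_const.add (hC1.mono hδε₀)

/-- If ω₀ ∈ ℝ² is (α,τ)-Diophantine and ω⋆(ε) = ω₀ + ω̂(ε) with ω̂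
continuous on [0,ε₀] and ω̂(0) = 0, then there is a non-empty set I⋆ ⊆ [0,ε₀] of at
least continuum cardinality on which ω⋆(ε) is (α/2, 2τ+2)-Diophantine; if moreover ω̂
is C¹ on [0,ε₀] then I⋆ has positive Lebesgue measure. -/
theorem stmt6 (τ α : ℝ) (hτ : 1 < τ) (hα : 0 < α) (hα1 : α < 1)
    (ω₀ : Fin 2 → ℝ)
    (hdio : ∀ k : Fin 2 → ℤ, k ≠ 0 →
      α / (∑ i, |(k i : ℝ)|) ^ τ ≤ |∑ i, (k i : ℝ) * ω₀ i|)
    (ε₀ : ℝ) (hε₀ : 0 < ε₀)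
    (ωhat : ℝ → Fin 2 → ℝ) (hcont : ContinuousOn ωhat (Set.Icc 0 ε₀))
    (h0 : ωhat 0 = 0) :
    ∃ S : Set ℝ, S ⊆ Set.Icc 0 ε₀ ∧ S.Nonempty ∧
      Cardinal.continuum ≤ Cardinal.mk S ∧
      (∀ ε ∈ S, ∀ k : Fin 2 → ℤ, k ≠ 0 →
        α / (2 * (∑ i, |(k i : ℝ)|) ^ (2 * τ + 2))
          ≤ |∑ i, (k i : ℝ) * (ω₀ i + ωhat ε i)|) ∧
      (ContDiffOn ℝ 1 ωhat (Set.Icc 0 ε₀) → 0 < volume S) :=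
  stmt6_general τ α hτ hα ω₀ hdio ε₀ hε₀ ωhat hcont h0
end

section
/- Let O ⊆ ℝⁿ be open bounded connected, ω₀ ∈ O, μ₀ ≠ 0 a real number, ν₀ ∈ ℝ with |⟨ω₀, k⟩ + ν₀| ≥ α/|k|^τ for all k ∈ ℤⁿ∖{0}. Let μ̂ : Ō → ℝ be C¹ and set f_k(ω₀, λ) = ⟨ω₀, k⟩ + ν₀ − (1+λ)^{−1}(λ·μ₀ − μ̂((1+λ)ω₀)). Define I_σ = [−σ, σ] and I*_σ = {λ ∈ I_σ : |f_k(ω₀, λ)| ≥ α/(2|k|^{2τ+1}) for all k ∈ ℤⁿ∖{0}}. Then there exists σ₀ > 0 (depending on α, τ) such that if ‖μ̂‖_{C¹(Ō)} = σ ≤ σ₀, the set I*_σ has positive Lebesgue measure and meas(I_σ ∖ I*_σ) = o(σ) as σ → 0; in fact meas(I_σ ∖ I*_σ) ≤ c σ (σ/α)^{(τ−n+1)/τ}. -/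
open MeasureTheory

section auxiliaries
open Finset


lemma count_shell (m j : ℕ) (s : Finset (Fin (m+1) → ℤ))
    (hs : ∀ k ∈ s, ∑ i, (k i).natAbs = j) : s.card ≤ 2 * (2*j+1)^m := by
  classical
  set t := (Fintype.piFinset fun _ : Fin m => Finset.Icc (-(j:ℤ)) (j:ℤ))
      ×ˢ (Finset.univ : Finset Bool) with ht
  set φ : (Fin (m+1) → ℤ) → (Fin m → ℤ) × Bool :=
    fun k => (fun i => k i.castSucc, decide (0 ≤ k (Fin.last m))) with hφ
  have hmaps : ∀ k ∈ s, φ k ∈ t := by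
    intro k hk
    simp only [ht, hφ, Finset.mem_product, Fintype.mem_piFinset, Finset.mem_Icc,
      Finset.mem_univ, and_true]
    intro i
    have h1 : (k i.castSucc).natAbs ≤ j := by
      rw [← hs k hk]
      exact Finset.single_le_sum (f := fun i => (k i).natAbs) (fun _ _ => Nat.zero_le _)
        (Finset.mem_univ _)
    omega
  have hinj : Set.InjOn φ s := by
    intro a ha b hb hab
    simp only [hφ, Prod.mk.injEq] at hab
    obtain ⟨h1, h2⟩ := hab
    have hsa := hs a ha
    have hsb := hs b hb
    rw [Fin.sum_univ_castSucc] at hsa hsb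
    have hsum : ∑ i : Fin m, (a i.castSucc).natAbs = ∑ i : Fin m, (b i.castSucc).natAbs :=
      Finset.sum_congr rfl fun i _ => by rw [congrFun h1 i]
    have habs : (a (Fin.last m)).natAbs = (b (Fin.last m)).natAbs := by omega
    have hsign : (0 ≤ a (Fin.last m)) ↔ (0 ≤ b (Fin.last m)) := by
      constructor <;> intro h
      · exact of_decide_eq_true (h2 ▸ decide_eq_true h)
      · exact of_decide_eq_true (h2.symm ▸ decide_eq_true h)
    have hlast : a (Fin.last m) = b (Fin.last m) := by
      rcases le_or_gt 0 (a (Fin.last m)) with h | h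
      · have hb' := hsign.mp h; omega
      · have hb' : b (Fin.last m) < 0 := by
          by_contra hc; push_neg at hc
          exact absurd (hsign.mpr hc) (not_le.mpr h)
        omega
    funext i
    induction i using Fin.lastCases with
    | last => exact hlast
    | cast i => exact congrFun h1 i
  calc s.card ≤ t.card := Finset.card_le_card_of_injOn φ hmaps hinj
    _ ≤ 2 * (2*j+1)^m := by
        rw [ht, Finset.card_product, Fintype.card_piFinset]
        simp only [Int.card_Icc, Finset.card_univ, Fintype.card_bool, Finset.prod_const,
          Fintype.card_fin]
        have h2 : ((j:ℤ) + 1 - -(j:ℤ)).toNat = 2*j+1 := by omega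
        rw [h2]
        omega


lemma step_rpow (ρ : ℝ) (hρ : 0 < ρ) (j : ℕ) (hj : 1 ≤ j) :
    (j:ℝ) ^ (-(ρ+1)) ≤ 2^(ρ+1)/ρ * ((j:ℝ)^(-ρ) - ((j:ℝ)+1)^(-ρ)) := by
  have hj0 : (0:ℝ) < j := by exact_mod_cast hj
  have hj1 : (1:ℝ) ≤ j := by exact_mod_cast hj
  have hmvt := exists_hasDerivAt_eq_slope (fun x : ℝ => x ^ (-ρ))
      (fun x : ℝ => (-ρ) * x ^ (-ρ - 1)) (a := (j:ℝ)) (b := (j:ℝ)+1)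
      (by linarith)
      (by
        intro x hx
        have hx0 : x ≠ 0 := by
          simp only [Set.mem_Icc] at hx; intro h; rw [h] at hx; linarith [hx.1]
        exact ((Real.hasDerivAt_rpow_const (Or.inl hx0)).continuousAt).continuousWithinAt)
      (by
        intro x hx
        have hx0 : x ≠ 0 := by
          simp only [Set.mem_Ioo] at hx; intro h; rw [h] at hx; linarith [hx.1]
        exact Real.hasDerivAt_rpow_const (Or.inl hx0))
  obtain ⟨ξ, hξ, hslope⟩ := hmvt
  simp only [Set.mem_Ioo] at hξ
  have hξ0 : 0 < ξ := lt_trans hj0 hξ.1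
  have hslope' : -ρ * ξ ^ (-ρ-1) = ((j:ℝ)+1)^(-ρ) - (j:ℝ)^(-ρ) := by
    have h : ((j:ℝ)+1) - (j:ℝ) = 1 := by ring
    simpa [h] using hslope
  have key : (j:ℝ)^(-ρ) - ((j:ℝ)+1)^(-ρ) = ρ * ξ ^ (-ρ-1) := by linarith
  rw [key]
  have h1 : ((j:ℝ)+1) ^ (-ρ-1) ≤ ξ ^ (-ρ-1) :=
    Real.rpow_le_rpow_of_nonpos hξ0 hξ.2.le (by linarith)
  have h2 : (2*(j:ℝ)) ^ (-ρ-1) ≤ ((j:ℝ)+1) ^ (-ρ-1) :=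
    Real.rpow_le_rpow_of_nonpos (by linarith) (by linarith) (by linarith)
  have h3 : (2*(j:ℝ)) ^ (-ρ-1) = 2^(-ρ-1) * (j:ℝ)^(-ρ-1) :=
    Real.mul_rpow (by norm_num) hj0.le
  have h4 : (j:ℝ) ^ (-(ρ+1)) = (j:ℝ) ^ (-ρ-1) := by ring_nf
  have h5 : (0:ℝ) < 2^(ρ+1) := Real.rpow_pos_of_pos (by norm_num) _
  have h6 : (2:ℝ)^(-ρ-1) = (2^(ρ+1))⁻¹ := by
    rw [← Real.rpow_neg (by norm_num : (0:ℝ) ≤ 2)]; ring_nf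
  have chain : (2^(ρ+1))⁻¹ * (j:ℝ)^(-ρ-1) ≤ ξ ^ (-ρ-1) := by
    rw [← h6, ← h3]; exact le_trans h2 h1
  have hgoal : (j:ℝ)^(-ρ-1) ≤ 2^(ρ+1) * ξ^(-ρ-1) := by
    calc (j:ℝ)^(-ρ-1) = 2^(ρ+1) * ((2^(ρ+1))⁻¹ * (j:ℝ)^(-ρ-1)) := by field_simp
      _ ≤ 2^(ρ+1) * ξ^(-ρ-1) := mul_le_mul_of_nonneg_left chain h5.le
  have heq : 2^(ρ+1)/ρ * (ρ * ξ^(-ρ-1)) = 2^(ρ+1) * ξ^(-ρ-1) := by field_simp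
  rw [h4, heq]
  exact hgoal

lemma tail_sum (ρ : ℝ) (hρ : 0 < ρ) (N : ℕ) (hN : 1 ≤ N) (J : Finset ℕ)
    (hJ : ∀ j ∈ J, N ≤ j) :
    ∑ j ∈ J, (j:ℝ) ^ (-(ρ+1)) ≤ 2^(ρ+1)/ρ * (N:ℝ)^(-ρ) := by
  classical
  set u : ℕ → ℝ := fun j => (j:ℝ)^(-ρ) with hu
  have hC : (0:ℝ) < 2^(ρ+1)/ρ := by positivity
  have hstep : ∀ j ∈ J, (j:ℝ)^(-(ρ+1)) ≤ 2^(ρ+1)/ρ * (u j - u (j+1)) := by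
    intro j hj
    have := step_rpow ρ hρ j (le_trans hN (hJ j hj))
    simpa [hu] using this
  have hmono : ∀ a b : ℕ, 1 ≤ a → a ≤ b → u b ≤ u a := by
    intro a b ha hab
    exact Real.rpow_le_rpow_of_nonpos (by exact_mod_cast ha) (by exact_mod_cast hab)
      (by linarith)
  calc ∑ j ∈ J, (j:ℝ)^(-(ρ+1)) ≤ ∑ j ∈ J, 2^(ρ+1)/ρ * (u j - u (j+1)) :=
        Finset.sum_le_sum hstep
    _ = 2^(ρ+1)/ρ * ∑ j ∈ J, (u j - u (j+1)) := by rw [Finset.mul_sum]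
    _ ≤ 2^(ρ+1)/ρ * u N := by
        apply mul_le_mul_of_nonneg_left _ hC.le
        rcases J.eq_empty_or_nonempty with rfl | hne
        · simp only [Finset.sum_empty]
          exact Real.rpow_nonneg (Nat.cast_nonneg N) _
        · set M := J.max' hne + 1 with hM
          have hNM : N ≤ M := by
            have := hJ _ (J.max'_mem hne); omega
          have hJsub : J ⊆ Finset.Ico N M := by
            intro j hj
            simp only [Finset.mem_Ico]
            exact ⟨hJ j hj, by have := Finset.le_max' J j hj; omega⟩
          have hnn : ∀ j ∈ Finset.Ico N M, 0 ≤ u j - u (j+1) := by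
            intro j hj
            simp only [Finset.mem_Ico] at hj
            have := hmono j (j+1) (le_trans hN hj.1) (by omega)
            linarith
          calc ∑ j ∈ J, (u j - u (j+1)) ≤ ∑ j ∈ Finset.Ico N M, (u j - u (j+1)) :=
                Finset.sum_le_sum_of_subset_of_nonneg hJsub (fun j hj _ => hnn j hj)
            _ = u N - u M := by
                rw [Finset.sum_Ico_eq_sum_range]
                have hcongr : ∀ i ∈ Finset.range (M - N), u (N+i) - u (N+i+1)
                    = (fun i => u (N+i)) i - (fun i => u (N+i)) (i+1) := by
                  intro i _; simp [Nat.add_assoc]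
                rw [Finset.sum_congr rfl hcongr, Finset.sum_range_sub']
                have e1 : N + (M - N) = M := by omega
                simp [e1]
            _ ≤ u N := by
                have : 0 ≤ u M := Real.rpow_nonneg (Nat.cast_nonneg M) _
                linarith

set_option maxHeartbeats 1600000 in
private theorem stmt10_aux (M : ℕ) (τ α : ℝ) (hτ : ((M+1 : ℕ) : ℝ) - 1 < τ) (hα : 0 < α) (hα1 : α < 1)
    (O : Set (Fin (M+1) → ℝ)) (hO : IsOpen O)
    (ω₀ : Fin (M+1) → ℝ) (hω₀ : ω₀ ∈ O) (μ₀ ν₀ : ℝ) (hμ₀ : μ₀ ≠ 0)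
    (hdio : ∀ k : Fin (M+1) → ℤ, k ≠ 0 →
      α / (∑ i, |(k i : ℝ)|) ^ τ ≤ |∑ i, (k i : ℝ) * ω₀ i + ν₀|)
    (σ₁ : ℝ) (hσ₁ : 0 < σ₁)
    (hin : ∀ lam : ℝ, |lam| ≤ σ₁ → (1 + lam) • ω₀ ∈ O) :
    ∃ σ₀ > 0, σ₀ ≤ σ₁ ∧ ∃ c > 0,
      ∀ μhat : (Fin (M+1) → ℝ) → ℝ, ContDiffOn ℝ 1 μhat (closure O) →
      ∀ σ : ℝ, 0 < σ → σ ≤ σ₀ →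
      (∀ x ∈ closure O, |μhat x| ≤ σ ∧ ‖fderiv ℝ μhat x‖ ≤ σ) →
      ∃ S : Set ℝ,
        S = {lam ∈ Set.Icc (-σ) σ | ∀ k : Fin (M+1) → ℤ, k ≠ 0 →
          α / (2 * (∑ i, |(k i : ℝ)|) ^ (2 * τ + 1))
            ≤ |∑ i, (k i : ℝ) * ω₀ i + ν₀
                - (1 + lam)⁻¹ * (lam * μ₀ - μhat ((1 + lam) • ω₀))|} ∧
        0 < volume S ∧
        volume (Set.Icc (-σ) σ \ S)
          ≤ ENNReal.ofReal (c * σ * (σ / α) ^ ((τ - ((M+1 : ℕ) : ℝ) + 1) / τ)) := by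
  classical
  have hτM : (M:ℝ) < τ := by push_cast at hτ; linarith
  have hτ0 : 0 < τ := lt_of_le_of_lt (Nat.cast_nonneg M) hτM
  set W : ℝ := ‖ω₀‖ with hW
  have hW0 : 0 ≤ W := norm_nonneg _
  set A : ℝ := 4*(|μ₀|+1) with hA
  have hA0 : 0 < A := by have := abs_nonneg μ₀; positivity
  set ρ : ℝ := 2*τ - M with hρdef
  have hρ : 0 < ρ := by simp only [hρdef]; linarith
  set θ : ℝ := (τ - M)/τ with hθdef
  have hθ : 0 < θ := by apply div_pos <;> linarith
  set m0 : ℝ := |μ₀|/8 with hm0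
  have hm0pos : 0 < m0 := by have := abs_pos.mpr hμ₀; positivity
  set c : ℝ := 4*3^M/m0 * (2^(ρ+1)/ρ) * A^(1+θ) with hc
  have hcpos : 0 < c := by
    have h1 : (0:ℝ) < 2^(ρ+1) := Real.rpow_pos_of_pos (by norm_num) _
    have h2 : (0:ℝ) < A^(1+θ) := Real.rpow_pos_of_pos hA0 _
    have h3 : (0:ℝ) < (3:ℝ)^M := by positivity
    positivity
  set E : ℝ := α * (c⁻¹)^(1/θ) with hE
  have hEpos : 0 < E := by
    have : (0:ℝ) < (c⁻¹)^(1/θ) := Real.rpow_pos_of_pos (by positivity) _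
    positivity
  set σ₀ : ℝ := min (min σ₁ (1/4)) (min (|μ₀|/(4*(1+W))) (min (α/A) E)) with hσ₀
  have hσ₀pos : 0 < σ₀ := by
    have h1 : (0:ℝ) < |μ₀|/(4*(1+W)) := by have := abs_pos.mpr hμ₀; positivity
    have h2 : (0:ℝ) < α/A := by positivity
    simp only [hσ₀, lt_min_iff]
    exact ⟨⟨hσ₁, by norm_num⟩, h1, h2, hEpos⟩
  refine ⟨σ₀, hσ₀pos, (min_le_left _ _).trans (min_le_left _ _), c, hcpos, ?_⟩
  intro μh hC1 σ hσ hσσ₀ hbd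
  have hσ14 : σ ≤ 1/4 := hσσ₀.trans ((min_le_left _ _).trans (min_le_right _ _))
  have hσs1 : σ ≤ σ₁ := hσσ₀.trans ((min_le_left _ _).trans (min_le_left _ _))
  have hσμ : σ ≤ |μ₀|/(4*(1+W)) := hσσ₀.trans ((min_le_right _ _).trans (min_le_left _ _))
  have hσA : σ ≤ α/A := hσσ₀.trans ((min_le_right _ _).trans ((min_le_right _ _).trans (min_le_left _ _)))
  have hσE : σ ≤ E := hσσ₀.trans ((min_le_right _ _).trans ((min_le_right _ _).trans (min_le_right _ _)))
  -- basic defs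
  set H : ℝ → ℝ := fun lam => μh ((1+lam) • ω₀) with hHdef
  set g : ℝ → ℝ := fun lam => (lam*μ₀ - H lam)/(1+lam) with hgdef
  set Dv : ℝ → ℝ := fun lam => fderiv ℝ μh ((1+lam) • ω₀) ω₀ with hDvdef
  set G : ℝ → ℝ := fun lam => ((1*μ₀ - Dv lam) * (1+lam) - (lam*μ₀ - H lam) * 1)/(1+lam)^2
    with hGdef
  set L : (Fin (M+1) → ℤ) → ℝ := fun k => ∑ i, (k i:ℝ)*ω₀ i + ν₀ with hLdef
  set nrm : (Fin (M+1) → ℤ) → ℝ := fun k => ∑ i, |(k i:ℝ)| with hnrmdef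
  set sh : (Fin (M+1) → ℤ) → ℕ := fun k => ∑ i, (k i).natAbs with hshdef
  set ε : (Fin (M+1) → ℤ) → ℝ := fun k => α/(2 * nrm k ^ (2*τ+1)) with hεdef
  have hnrmsh : ∀ k, nrm k = (sh k : ℝ) := by
    intro k
    simp only [hnrmdef, hshdef, Nat.cast_sum]
    refine Finset.sum_congr rfl fun i _ => ?_
    rw [Nat.cast_natAbs, Int.cast_abs]
  have hsh1 : ∀ k : Fin (M+1) → ℤ, k ≠ 0 → 1 ≤ sh k := by
    intro k hk
    obtain ⟨i, hi⟩ := Function.ne_iff.mp hk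
    have hi' : k i ≠ 0 := by simpa using hi
    calc 1 ≤ (k i).natAbs := Int.natAbs_pos.mpr hi'
      _ ≤ sh k := by
          simp only [hshdef]
          exact Finset.single_le_sum (f := fun i => (k i).natAbs)
            (fun _ _ => Nat.zero_le _) (Finset.mem_univ i)
  -- analytic facts on [-σ, σ]
  have hdom : ∀ lam : ℝ, |lam| ≤ σ → (1+lam) • ω₀ ∈ O := by
    intro lam hlam
    exact hin lam (hlam.trans hσs1)
  have hden : ∀ lam : ℝ, |lam| ≤ σ → 3/4 ≤ 1 + lam ∧ 1 + lam ≤ 5/4 := by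
    intro lam hlam
    rw [abs_le] at hlam
    constructor <;> linarith
  have hHbd : ∀ lam : ℝ, |lam| ≤ σ → |H lam| ≤ σ := by
    intro lam hlam
    exact (hbd _ (subset_closure (hdom lam hlam))).1
  have hDvbd : ∀ lam : ℝ, |lam| ≤ σ → |Dv lam| ≤ σ * W := by
    intro lam hlam
    calc |Dv lam| ≤ ‖fderiv ℝ μh ((1+lam) • ω₀)‖ * ‖ω₀‖ :=
          (fderiv ℝ μh ((1+lam) • ω₀)).le_opNorm ω₀
      _ ≤ σ * W := by
          apply mul_le_mul_of_nonneg_right _ hW0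
          exact (hbd _ (subset_closure (hdom lam hlam))).2
  have hderivH : ∀ lam : ℝ, |lam| ≤ σ → HasDerivAt H (Dv lam) lam := by
    intro lam hlam
    have hdiff : DifferentiableAt ℝ μh ((1+lam) • ω₀) :=
      ((hC1.differentiableOn one_ne_zero).mono subset_closure).differentiableAt
        (hO.mem_nhds (hdom lam hlam))
    have h1 : HasDerivAt (fun x : ℝ => (1+x) • ω₀) ω₀ lam := by
      have := ((hasDerivAt_id lam).const_add 1).smul_const ω₀
      simpa using this
    have := hdiff.hasFDerivAt.comp_hasDerivAt lam h1
    exact this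
  have hderivg : ∀ lam : ℝ, |lam| ≤ σ → HasDerivAt g (G lam) lam := by
    intro lam hlam
    have hne : 1 + lam ≠ 0 := by have := (hden lam hlam).1; linarith
    have hnum : HasDerivAt (fun x : ℝ => x*μ₀ - H x) (1*μ₀ - Dv lam) lam :=
      ((hasDerivAt_id lam).mul_const μ₀).sub (hderivH lam hlam)
    have hd : HasDerivAt (fun x : ℝ => 1 + x) 1 lam := (hasDerivAt_id lam).const_add 1
    exact hnum.div hd hne
  have hGbd : ∀ lam : ℝ, |lam| ≤ σ → m0 ≤ |G lam| := by
    intro lam hlam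
    obtain ⟨hd1, hd2⟩ := hden lam hlam
    have hH1 := hHbd lam hlam
    have hD1 := hDvbd lam hlam
    have hsq : (1+lam)^2 ≤ 2 := by nlinarith [hd1, hd2]
    have hsq0 : 0 < (1+lam)^2 := by positivity
    have hnum : |μ₀|/2 ≤ |(1*μ₀ - Dv lam) * (1+lam) - (lam*μ₀ - H lam) * 1| := by
      have hre : (1*μ₀ - Dv lam) * (1+lam) - (lam*μ₀ - H lam) * 1
          = μ₀ + H lam - (1+lam) * Dv lam := by ring
      rw [hre]
      have h1 : |(1+lam) * Dv lam| ≤ (5/4) * (σ*W) := by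
        rw [abs_mul]
        apply mul_le_mul _ hD1 (abs_nonneg _) (by norm_num)
        rw [abs_le]; constructor <;> linarith
      have h2 : |μ₀| - |H lam| - |(1+lam)*Dv lam| ≤ |μ₀ + H lam - (1+lam) * Dv lam| := by
        have := abs_sub_abs_le_abs_sub (μ₀ + H lam) ((1+lam) * Dv lam)
        have := abs_add_le μ₀ (H lam)
        have habs : |μ₀| - |H lam| ≤ |μ₀ + H lam| := by
          have := abs_sub_abs_le_abs_sub μ₀ (-(H lam))
          simp only [abs_neg, sub_neg_eq_add] at this
          linarith
        linarith [abs_sub_abs_le_abs_sub (μ₀ + H lam) ((1+lam) * Dv lam)]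
      have h3 : σ + (5/4)*(σ*W) ≤ |μ₀|/2 := by
        have : σ * (4*(1+W)) ≤ |μ₀| := by
          rw [← le_div_iff₀ (by positivity)] at *
          exact hσμ
        nlinarith
      linarith
    simp only [hGdef]
    rw [abs_div, abs_of_pos hsq0]
    rw [le_div_iff₀ hsq0]
    calc m0 * (1+lam)^2 ≤ m0 * 2 := by nlinarith
      _ ≤ |μ₀|/2 := by rw [hm0]; linarith [abs_nonneg μ₀]
      _ ≤ _ := hnum
  have hgbd : ∀ lam : ℝ, |lam| ≤ σ → |g lam| ≤ A*σ/2 := by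
    intro lam hlam
    obtain ⟨hd1, hd2⟩ := hden lam hlam
    have hH1 := hHbd lam hlam
    simp only [hgdef]
    rw [abs_div, abs_of_pos (by linarith : (0:ℝ) < 1 + lam)]
    rw [div_le_iff₀ (by linarith : (0:ℝ) < 1 + lam)]
    have h1 : |lam*μ₀ - H lam| ≤ σ*|μ₀| + σ := by
      calc |lam*μ₀ - H lam| ≤ |lam*μ₀| + |H lam| := abs_sub _ _
        _ ≤ σ*|μ₀| + σ := by
            rw [abs_mul]
            have : |lam| * |μ₀| ≤ σ * |μ₀| := mul_le_mul_of_nonneg_right hlam (abs_nonneg _)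
            linarith
    calc |lam*μ₀ - H lam| ≤ σ*|μ₀| + σ := h1
      _ ≤ A*σ/2 * (3/4) := by rw [hA]; nlinarith [abs_nonneg μ₀]
      _ ≤ A*σ/2 * (1+lam) := by
          apply mul_le_mul_of_nonneg_left (by linarith)
          positivity
  -- bad sets
  set B : (Fin (M+1) → ℤ) → Set ℝ :=
    fun k => {lam | lam ∈ Set.Icc (-σ) σ ∧ k ≠ 0 ∧ |L k - g lam| < ε k} with hBdef
  set P : (Fin (M+1) → ℤ) → Prop :=
    fun k => k ≠ 0 ∧ α < A*σ*((sh k : ℝ))^τ with hPdef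
  set b : (Fin (M+1) → ℤ) → ℝ :=
    fun k => if P k then 2*α/m0 * ((sh k : ℝ))^(-(2*τ+1)) else 0 with hbdef
  have hbnn : ∀ k, 0 ≤ b k := by
    intro k
    simp only [hbdef]
    split
    · have : (0:ℝ) ≤ ((sh k : ℝ))^(-(2*τ+1)) := Real.rpow_nonneg (Nat.cast_nonneg _) _
      positivity
    · exact le_refl 0
  have habs : ∀ lam : ℝ, lam ∈ Set.Icc (-σ) σ → |lam| ≤ σ := by
    intro lam hlam
    rw [Set.mem_Icc] at hlam
    rw [abs_le]; exact hlam
  -- emptiness under failed shell condition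
  have hempty : ∀ k : Fin (M+1) → ℤ, k ≠ 0 → ¬ (α < A*σ*((sh k : ℝ))^τ) → B k = ∅ := by
    intro k hk hcond
    push_neg at hcond
    ext lam
    simp only [hBdef, Set.mem_setOf_eq, Set.mem_empty_iff_false, iff_false, not_and]
    intro hlam _ 
    rw [not_lt]
    have hJ1 : (1:ℝ) ≤ (sh k : ℝ) := by exact_mod_cast hsh1 k hk
    have hJ0 : (0:ℝ) < (sh k : ℝ) := by linarith
    have hτpos : (0:ℝ) < (sh k:ℝ)^τ := Real.rpow_pos_of_pos hJ0 _
    have hspos : (0:ℝ) < (sh k:ℝ)^(2*τ+1) := Real.rpow_pos_of_pos hJ0 _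
    have hdk := hdio k hk
    rw [show (∑ i, |((k i : ℤ):ℝ)|) = nrm k from rfl, hnrmsh k] at hdk
    have hLbig : α/(sh k:ℝ)^τ ≤ |L k| := hdk
    have hgl := hgbd lam (habs lam hlam)
    have hmono : (sh k:ℝ)^τ ≤ (sh k:ℝ)^(2*τ+1) :=
      Real.rpow_le_rpow_of_exponent_le hJ1 (by linarith)
    have hεle : ε k ≤ α/(2*(sh k:ℝ)^τ) := by
      simp only [hεdef, hnrmsh k]
      apply div_le_div_of_nonneg_left hα.le (by positivity)
      linarith
    -- α/Jτ ≤ |L k| ≤ |L k - g lam| + |g lam|; if |L k - g lam| < ε then contradiction unless cond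
    by_contra hlt
    push_neg at hlt
    have h1 : |L k| ≤ |L k - g lam| + |g lam| := by
      have := abs_sub_abs_le_abs_sub (L k) (g lam)
      have h2 := abs_add_le (L k - g lam) (g lam)
      calc |L k| = |(L k - g lam) + g lam| := by ring_nf
        _ ≤ |L k - g lam| + |g lam| := abs_add_le _ _
    have hchain : α/(sh k:ℝ)^τ < α/(2*(sh k:ℝ)^τ) + A*σ/2 := by
      calc α/(sh k:ℝ)^τ ≤ |L k| := hLbig
        _ ≤ |L k - g lam| + |g lam| := h1
        _ < ε k + A*σ/2 := by linarith
        _ ≤ α/(2*(sh k:ℝ)^τ) + A*σ/2 := by linarith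
    have hfin : α/(2*(sh k:ℝ)^τ) < A*σ/2 := by
      have : α/(sh k:ℝ)^τ = α/(2*(sh k:ℝ)^τ) + α/(2*(sh k:ℝ)^τ) := by
        field_simp; ring
      linarith [this ▸ hchain]
    rw [div_lt_div_iff₀ (by positivity) (by norm_num : (0:ℝ) < 2)] at hfin
    have : α < A*σ*(sh k:ℝ)^τ := by nlinarith
    linarith
  -- diameter bound
  have hvolB : ∀ k : Fin (M+1) → ℤ, volume (B k) ≤ ENNReal.ofReal (b k) := by
    intro k
    by_cases hP : P k
    · rcases Set.eq_empty_or_nonempty (B k) with hBe | ⟨lam₀, hlam₀⟩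
      · rw [hBe]
        simp only [measure_empty]
        exact zero_le
      · obtain ⟨hk, hcond⟩ := hP
        have hJ1 : (1:ℝ) ≤ (sh k : ℝ) := by exact_mod_cast hsh1 k hk
        have hJ0 : (0:ℝ) < (sh k : ℝ) := by linarith
        have hspos : (0:ℝ) < (sh k:ℝ)^(2*τ+1) := Real.rpow_pos_of_pos hJ0 _
        have hεval : ε k = α/(2*(sh k:ℝ)^(2*τ+1)) := by rw [hεdef]; simp only [hnrmsh k]
        have hεpos : 0 < ε k := by rw [hεval]; positivity
        set d : ℝ := 2*ε k/m0 with hd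
        have hdpos : 0 < d := by positivity
        have hdi : ∀ a ∈ B k, ∀ b' ∈ B k, a < b' → b' - a ≤ d := by
          intro a ha b' hb' hab
          simp only [hBdef, Set.mem_setOf_eq] at ha hb'
          have haσ : |a| ≤ σ := habs a ha.1
          have hbσ : |b'| ≤ σ := habs b' hb'.1
          rw [Set.mem_Icc] at ha hb'
          obtain ⟨⟨ha1, ha2⟩, _, hfa⟩ := ha
          obtain ⟨⟨hb1, hb2⟩, _, hfb⟩ := hb'
          have hmem : ∀ x ∈ Set.Icc a b', |x| ≤ σ := by
            intro x hx
            rw [Set.mem_Icc] at hx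
            rw [abs_le]; constructor <;> linarith
          obtain ⟨ξ, hξ, hs⟩ := exists_hasDerivAt_eq_slope (fun x => L k - g x)
            (fun x => -(G x)) hab
            (fun x hx => ((hderivg x (hmem x hx)).const_sub (L k)).continuousAt.continuousWithinAt)
            (fun x hx => (hderivg x (hmem x (Set.mem_Icc_of_Ioo hx))).const_sub (L k))
          rw [Set.mem_Ioo] at hξ
          have hξσ : |ξ| ≤ σ := by rw [abs_le]; constructor <;> linarith
          have hGξ := hGbd ξ hξσ
          have heq : (L k - g b') - (L k - g a) = -(G ξ) * (b' - a) := by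
            rw [eq_div_iff (ne_of_gt (by linarith : (0:ℝ) < b' - a))] at hs
            linarith [hs]
          have h2ε : |(L k - g b') - (L k - g a)| < 2 * ε k := by
            calc |(L k - g b') - (L k - g a)| ≤ |L k - g b'| + |L k - g a| := abs_sub _ _
              _ < 2 * ε k := by linarith
          rw [heq, abs_mul, abs_neg, abs_of_pos (by linarith : (0:ℝ) < b' - a)] at h2ε
          have : m0 * (b' - a) ≤ |G ξ| * (b' - a) :=
            mul_le_mul_of_nonneg_right hGξ (by linarith)
          rw [hd]
          rw [le_div_iff₀ hm0pos]
          linarith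
        have hsub : B k ⊆ Set.Icc (lam₀ - d) (lam₀ + d) := by
          intro x hx
          rw [Set.mem_Icc]
          rcases lt_trichotomy x lam₀ with h | h | h
          · have := hdi x hx lam₀ hlam₀ h
            constructor <;> linarith
          · rw [h]; constructor <;> linarith
          · have := hdi lam₀ hlam₀ x hx h
            constructor <;> linarith
        calc volume (B k) ≤ volume (Set.Icc (lam₀ - d) (lam₀ + d)) := measure_mono hsub
          _ = ENNReal.ofReal (2*d) := by rw [Real.volume_Icc]; ring_nf
          _ ≤ ENNReal.ofReal (b k) := by
              apply ENNReal.ofReal_le_ofReal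
              have hbval : b k = 2*α/m0 * ((sh k : ℝ))^(-(2*τ+1)) := by
                rw [hbdef]; exact if_pos ⟨hk, hcond⟩
              rw [hbval, hd, hεval, Real.rpow_neg hJ0.le]
              apply le_of_eq
              have hne1 : ((sh k:ℝ))^(2*τ+1) ≠ 0 := ne_of_gt hspos
              have hne2 : m0 ≠ 0 := ne_of_gt hm0pos
              field_simp
    · have hBe : B k = ∅ := by
        by_cases hk : k = 0
        · ext lam
          simp only [hBdef, Set.mem_setOf_eq, Set.mem_empty_iff_false, iff_false, not_and]
          intro _ hk2
          exact absurd hk hk2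
        · exact hempty k hk (fun hcond => hP ⟨hk, hcond⟩)
      rw [hBe]
      simp only [measure_empty]
      exact zero_le
  -- finite sum bound
  set K : ℝ := (α/(A*σ))^(1/τ) with hKdef
  have hx0 : (0:ℝ) < α/(A*σ) := by positivity
  have hx1 : (1:ℝ) ≤ α/(A*σ) := by
    rw [le_div_iff₀ (by positivity)]
    rw [le_div_iff₀ hA0] at hσA
    linarith
  have hK1 : (1:ℝ) ≤ K := by
    rw [hKdef]
    calc (1:ℝ) = 1^(1/τ) := (Real.one_rpow _).symm
      _ ≤ (α/(A*σ))^(1/τ) := Real.rpow_le_rpow (by norm_num) hx1 (by positivity)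
  have hKτ : K^τ = α/(A*σ) := by
    rw [hKdef, ← Real.rpow_mul hx0.le, one_div_mul_cancel (ne_of_gt hτ0), Real.rpow_one]
  set N : ℕ := ⌈K⌉₊ with hNdef
  have hN1 : 1 ≤ N := by
    rw [hNdef]
    exact Nat.one_le_ceil_iff.mpr (by linarith)
  have hNK : K ≤ (N:ℝ) := Nat.le_ceil K
  have hKval : α * K^(-ρ) = A^(1+θ) * σ * (σ/α)^θ := by
    have hexp : (1/τ)*(-ρ) = -(1+θ) := by
      rw [hθdef, hρdef]
      field_simp
      ring
    have h1 : K^(-ρ) = (α/(A*σ))^(-(1+θ)) := by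
      rw [hKdef, ← Real.rpow_mul hx0.le, hexp]
    have h2 : (α/(A*σ))^(-(1+θ)) = (A*σ/α)^(1+θ) := by
      rw [Real.rpow_neg hx0.le, ← Real.inv_rpow hx0.le, inv_div]
    have h3 : (A*σ/α)^(1+θ) = (A*σ/α) * (A*σ/α)^θ := by
      rw [Real.rpow_add (by positivity), Real.rpow_one]
    have h4 : (A*σ/α)^θ = A^θ * (σ/α)^θ := by
      rw [mul_div_assoc, Real.mul_rpow hA0.le (by positivity)]
    have h5 : A^(1+θ) = A * A^θ := by
      rw [Real.rpow_add hA0, Real.rpow_one]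
    rw [h1, h2, h3, h4, h5]
    field_simp
  have hKey : ∀ s : Finset (Fin (M+1) → ℤ), ∑ k ∈ s, b k ≤ c*σ*(σ/α)^θ := by
    intro s
    have h0 : ∑ k ∈ s, b k
        = ∑ k ∈ s.filter P, (fun j : ℕ => 2*α/m0 * ((j:ℝ))^(-(2*τ+1))) (sh k) := by
      rw [Finset.sum_filter]
    rw [h0]
    set s' := s.filter P with hs'
    set F : ℕ → ℝ := fun j => 2*α/m0 * ((j:ℝ))^(-(2*τ+1)) with hF
    rw [Finset.sum_comp F sh]
    set J := s'.image sh with hJ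
    have hJfact : ∀ j ∈ J, N ≤ j ∧ 1 ≤ j := by
      intro j hj
      obtain ⟨k₀, hk₀, hshk₀⟩ := Finset.mem_image.mp hj
      obtain ⟨hk₀0, hk₀c⟩ := (Finset.mem_filter.mp hk₀).2
      rw [hshk₀] at hk₀c
      have hj1 : 1 ≤ j := hshk₀ ▸ hsh1 k₀ hk₀0
      have hjK : K ≤ (j:ℝ) := by
        by_contra hcon
        push_neg at hcon
        have : ((j:ℝ))^τ ≤ K^τ :=
          Real.rpow_le_rpow (Nat.cast_nonneg _) hcon.le hτ0.le
        rw [hKτ] at this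
        have : A*σ*((j:ℝ))^τ ≤ A*σ*(α/(A*σ)) :=
          mul_le_mul_of_nonneg_left this (by positivity)
        rw [mul_div_cancel₀ _ (by positivity : A*σ ≠ 0)] at this
        linarith
      exact ⟨Nat.ceil_le.mpr hjK, hj1⟩
    have hshell : ∀ j ∈ J, ((s'.filter fun k => sh k = j).card) • F j
        ≤ (4*3^M*α/m0) * ((j:ℝ))^(-(ρ+1)) := by
      intro j hj
      obtain ⟨hjN, hj1⟩ := hJfact j hj
      have hj0 : (0:ℝ) < (j:ℝ) := by exact_mod_cast hj1
      have hcard : (s'.filter fun k => sh k = j).card ≤ 2*(2*j+1)^M :=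
        count_shell M j _ (fun k hk => by
          have := (Finset.mem_filter.mp hk).2
          simpa [hshdef] using this)
      have hFnn : 0 ≤ F j := by
        have : (0:ℝ) ≤ ((j:ℝ))^(-(2*τ+1)) := Real.rpow_nonneg (Nat.cast_nonneg _) _
        rw [hF]
        positivity
      rw [nsmul_eq_mul]
      calc ((s'.filter fun k => sh k = j).card : ℝ) * F j
          ≤ ((2*(2*j+1)^M : ℕ):ℝ) * F j := by
            apply mul_le_mul_of_nonneg_right _ hFnn
            exact_mod_cast hcard
        _ ≤ (4*3^M*α/m0) * ((j:ℝ))^(-(ρ+1)) := by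
            have hc1 : ((2*(2*j+1)^M : ℕ):ℝ) = 2*((2*(j:ℝ)+1))^M := by push_cast; ring
            have hj1' : (1:ℝ) ≤ (j:ℝ) := by exact_mod_cast hj1
            have hc2 : (2*(j:ℝ)+1)^M ≤ (3*(j:ℝ))^M := by
              apply pow_le_pow_left₀ (by linarith) (by linarith)
            have hc3 : ((j:ℝ))^(M:ℕ) * ((j:ℝ))^(-(2*τ+1)) = ((j:ℝ))^(-(ρ+1)) := by
              rw [← Real.rpow_natCast (j:ℝ) M, ← Real.rpow_add hj0]
              congr 1
              rw [hρdef]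
              ring
            have hrnn : (0:ℝ) ≤ ((j:ℝ))^(-(2*τ+1)) := Real.rpow_nonneg (Nat.cast_nonneg _) _
            rw [hc1, hF]
            calc 2*(2*(j:ℝ)+1)^M * (2*α/m0 * ((j:ℝ))^(-(2*τ+1)))
                ≤ 2*(3*(j:ℝ))^M * (2*α/m0 * ((j:ℝ))^(-(2*τ+1))) := by
                  apply mul_le_mul_of_nonneg_right _ (by positivity)
                  apply mul_le_mul_of_nonneg_left hc2 (by norm_num)
              _ = (4*3^M*α/m0) * (((j:ℝ))^(M:ℕ) * ((j:ℝ))^(-(2*τ+1))) := by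
                  rw [mul_pow]
                  field_simp
                  ring
              _ = (4*3^M*α/m0) * ((j:ℝ))^(-(ρ+1)) := by rw [hc3]
    calc ∑ j ∈ J, ((s'.filter fun k => sh k = j).card) • F j
        ≤ ∑ j ∈ J, (4*3^M*α/m0) * ((j:ℝ))^(-(ρ+1)) := Finset.sum_le_sum hshell
      _ = (4*3^M*α/m0) * ∑ j ∈ J, ((j:ℝ))^(-(ρ+1)) := by rw [Finset.mul_sum]
      _ ≤ (4*3^M*α/m0) * (2^(ρ+1)/ρ * (N:ℝ)^(-ρ)) := by
          apply mul_le_mul_of_nonneg_left _ (by positivity)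
          exact tail_sum ρ hρ N hN1 J (fun j hj => (hJfact j hj).1)
      _ ≤ (4*3^M*α/m0) * (2^(ρ+1)/ρ * K^(-ρ)) := by
          apply mul_le_mul_of_nonneg_left _ (by positivity)
          apply mul_le_mul_of_nonneg_left _ (by positivity)
          exact Real.rpow_le_rpow_of_nonpos (by linarith) hNK (by linarith)
      _ = c*σ*(σ/α)^θ := by
          have h5 : (4*3^M*α/m0) * (2^(ρ+1)/ρ * K^(-ρ))
              = (4*3^M/m0) * (2^(ρ+1)/ρ) * (α * K^(-ρ)) := by ring
          rw [h5, hKval, hc]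
          ring
  -- conclusion
  set Sex : Set ℝ := {lam ∈ Set.Icc (-σ) σ | ∀ k : Fin (M+1) → ℤ, k ≠ 0 →
        α / (2 * (∑ i, |(k i : ℝ)|) ^ (2 * τ + 1))
          ≤ |∑ i, (k i : ℝ) * ω₀ i + ν₀
              - (1 + lam)⁻¹ * (lam * μ₀ - μh ((1 + lam) • ω₀))|} with hSex
  have hcover : Set.Icc (-σ) σ \ Sex ⊆ ⋃ k, B k := by
    rw [hSex]
    intro lam hlam
    obtain ⟨hIcc, hnS⟩ := hlam
    rw [Set.mem_setOf_eq] at hnS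
    push_neg at hnS
    obtain ⟨k, hk, hklt⟩ := hnS hIcc
    refine Set.mem_iUnion.mpr ⟨k, hIcc, hk, ?_⟩
    rw [inv_mul_eq_div] at hklt
    exact hklt
  have hbound : volume (Set.Icc (-σ) σ \ Sex)
      ≤ ENNReal.ofReal (c*σ*(σ/α)^θ) := by
    calc _ ≤ volume (⋃ k, B k) := measure_mono hcover
      _ ≤ ∑' k, volume (B k) := measure_iUnion_le _
      _ ≤ ∑' k, ENNReal.ofReal (b k) := ENNReal.tsum_le_tsum hvolB
      _ ≤ ENNReal.ofReal (c*σ*(σ/α)^θ) := by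
          rw [ENNReal.tsum_eq_iSup_sum]
          apply iSup_le
          intro s
          rw [← ENNReal.ofReal_sum_of_nonneg (fun k _ => hbnn k)]
          exact ENNReal.ofReal_le_ofReal (hKey s)
  have hθeq : (τ - ((M+1:ℕ):ℝ) + 1)/τ = θ := by
    rw [hθdef]; push_cast; ring_nf
  have hle1 : c*σ*(σ/α)^θ ≤ σ := by
    have hd1 : σ/α ≤ c⁻¹^(1/θ) := by
      rw [div_le_iff₀ hα]
      rw [hE] at hσE
      linarith [hσE]
    have hd2 : (σ/α)^θ ≤ c⁻¹ := by
      calc (σ/α)^θ ≤ (c⁻¹^(1/θ))^θ :=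
            Real.rpow_le_rpow (by positivity) hd1 hθ.le
        _ = c⁻¹ := by
            rw [← Real.rpow_mul (by positivity : (0:ℝ) ≤ c⁻¹), one_div_mul_cancel
              (ne_of_gt hθ), Real.rpow_one]
    calc c*σ*(σ/α)^θ ≤ c*σ*c⁻¹ := by
          apply mul_le_mul_of_nonneg_left hd2 (by positivity)
      _ = σ := by field_simp
  refine ⟨Sex, hSex, ?_, ?_⟩
  · rw [zero_lt_iff]
    intro h0
    have hsub2 : Set.Icc (-σ) σ ⊆ Sex ∪ (Set.Icc (-σ) σ \ Sex) :=
      fun x hx => or_iff_not_imp_left.mpr (fun hS => ⟨hx, hS⟩)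
    have hsplit := (measure_mono (μ := volume) hsub2).trans (measure_union_le (μ := volume) Sex (Set.Icc (-σ) σ \ Sex))
    rw [h0, zero_add, Real.volume_Icc] at hsplit
    have h2 := hsplit.trans (hbound.trans (ENNReal.ofReal_le_ofReal hle1))
    rw [ENNReal.ofReal_le_ofReal_iff hσ.le] at h2
    linarith
  · rw [show ((τ - (((M+1):ℕ):ℝ) + 1)/τ) = θ from hθeq]
    exact hbound

end auxiliaries

/-- Lemma on measure of the good set of dilations, paper Lemma 3.8:
O ⊆ ℝⁿ open bounded connected, ω₀ ∈ O, μ₀ ≠ 0, |⟨ω₀,k⟩ + ν₀| ≥ α/|k|^τ for all k ≠ 0;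
μ̂ C¹ on Ō with C¹-norm σ ≤ σ₀; f_k(λ) = ⟨ω₀,k⟩ + ν₀ − (1+λ)⁻¹(λμ₀ − μ̂((1+λ)ω₀)).
Then I⋆_σ = {λ ∈ [−σ,σ] : |f_k(λ)| ≥ α/(2|k|^{2τ+1}) ∀k≠0} has positive measure and
meas([−σ,σ] ∖ I⋆_σ) ≤ c σ (σ/α)^{(τ−n+1)/τ}. -/

theorem stmt10 (n : ℕ) (τ α : ℝ) (hτ : (n : ℝ) - 1 < τ) (hα : 0 < α) (hα1 : α < 1)
    (O : Set (Fin n → ℝ)) (hO : IsOpen O) (hOb : Bornology.IsBounded O)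
    (hOc : IsConnected O)
    (ω₀ : Fin n → ℝ) (hω₀ : ω₀ ∈ O) (μ₀ ν₀ : ℝ) (hμ₀ : μ₀ ≠ 0)
    (hdio : ∀ k : Fin n → ℤ, k ≠ 0 →
      α / (∑ i, |(k i : ℝ)|) ^ τ ≤ |∑ i, (k i : ℝ) * ω₀ i + ν₀|)
    (σ₁ : ℝ) (hσ₁ : 0 < σ₁)
    (hin : ∀ lam : ℝ, |lam| ≤ σ₁ → (1 + lam) • ω₀ ∈ O) :
    ∃ σ₀ > 0, σ₀ ≤ σ₁ ∧ ∃ c > 0,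
      ∀ μhat : (Fin n → ℝ) → ℝ, ContDiffOn ℝ 1 μhat (closure O) →
      ∀ σ : ℝ, 0 < σ → σ ≤ σ₀ →
      (∀ x ∈ closure O, |μhat x| ≤ σ ∧ ‖fderiv ℝ μhat x‖ ≤ σ) →
      ∃ S : Set ℝ,
        S = {lam ∈ Set.Icc (-σ) σ | ∀ k : Fin n → ℤ, k ≠ 0 →
          α / (2 * (∑ i, |(k i : ℝ)|) ^ (2 * τ + 1))
            ≤ |∑ i, (k i : ℝ) * ω₀ i + ν₀
                - (1 + lam)⁻¹ * (lam * μ₀ - μhat ((1 + lam) • ω₀))|} ∧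
        0 < volume S ∧
        volume (Set.Icc (-σ) σ \ S)
          ≤ ENNReal.ofReal (c * σ * (σ / α) ^ ((τ - (n : ℝ) + 1) / τ)) := by
  classical
  by_cases hn : n = 0
  · subst hn
    refine ⟨σ₁, hσ₁, le_rfl, 1, one_pos, ?_⟩
    intro μhat _ σ hσ hσσ₀ _
    have hk0 : ∀ k : Fin 0 → ℤ, k = 0 := fun k => Subsingleton.elim _ _
    refine ⟨Set.Icc (-σ) σ, ?_, ?_, ?_⟩
    · ext lam
      simp only [Set.mem_setOf_eq, Set.mem_Icc]
      constructor
      · intro h; exact ⟨h, fun k hk => absurd (hk0 k) hk⟩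
      · intro h; exact h.1
    · rw [Real.volume_Icc]
      simp only [ENNReal.ofReal_pos]
      linarith
    · simp only [Set.diff_self, measure_empty]
      exact zero_le
  · obtain ⟨M, rfl⟩ := Nat.exists_eq_succ_of_ne_zero hn
    exact stmt10_aux M τ α hτ hα hα1 O hO ω₀ hω₀ μ₀ ν₀ hμ₀ hdio σ₁ hσ₁ hin
end

section
/- Let (ω₀, Ω₀) ∈ ℝⁿ × ℝ satisfy the Melnikov-type Diophantine conditions |⟨ω₀, k⟩ + l·Ω₀| ≥ α/|k|^τ for all k ∈ ℤⁿ∖{0}, |l| ≤ 2, and |l·Ω₀| ≥ α for 1 ≤ |l| ≤ 2 (i.e. (ω₀, Ω₀) ∈ Õ_{α,τ} with n̄ = 1). Define I*_σ = {λ ∈ [−σ,σ] : ((1+λ)ω₀, Ω₀) ∈ Õ_{α/2, 2τ+1}}. Then for sufficiently small σ > 0, I*_σ is non-empty and meas([−σ,σ] ∖ I*_σ) ≤ c σ (σ/α)^{(τ−n+1)/τ}. -/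
open MeasureTheory

/-- The Melnikov-type Diophantine set Õ_{α,τ} with one normal frequency (n̄ = 1). -/
def TildeDio1 (n : ℕ) (α τ : ℝ) : Set ((Fin n → ℝ) × ℝ) :=
  {p | (∀ k : Fin n → ℤ, k ≠ 0 → ∀ l : ℤ, |l| ≤ 2 →
          α / (∑ i, |(k i : ℝ)|) ^ τ ≤ |∑ i, (k i : ℝ) * p.1 i + (l : ℝ) * p.2|) ∧
       (∀ l : ℤ, 1 ≤ |l| → |l| ≤ 2 → α ≤ |(l : ℝ) * p.2|)}

/-!
For `t ∈ [-σ, σ]` the small divisors of `((1 + t) ω₀, Ω₀)` are `(1 + t) ⟨k, ω₀⟩ + l Ω₀`. For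
`l = 0` they lose at most a factor `2`, and `|l Ω₀| ≥ α` is untouched, so a bad `t` lies in a
resonant zone `|⟨k, ω₀⟩ + l Ω₀ + t ⟨k, ω₀⟩| < α / (2 |k| ^ (2τ + 1))` with `l = ±1, ±2`. Such a
zone has length at most `2σ / |k| ^ (τ + 1)`, and it is empty unless `|k| ^ τ > α / (2σ M)` with
`M = α + 4 |Ω₀|`: on it the Diophantine bound for `⟨k, ω₀⟩ + l Ω₀` forces
`σ |⟨k, ω₀⟩| > α / (2 |k| ^ τ)`, while `|⟨k, ω₀⟩| ≤ M`. There are `O(m ^ (n - 1))` vectors with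
`|k|₁ = m`, so the bad set has measure `O(σ ∑_{m > K} m ^ (n - 2 - τ)) = O(σ K ^ (n - 1 - τ))` with
`K = (α / (2σ M)) ^ (1 / τ)`, which is the claimed bound.
-/

open scoped Finset

section PSeriesTail

variable {s : ℝ}

/-- Mean value theorem for `y ↦ y ^ (1 - s)` on `[x, x + 1]`, with the derivative bounded at the
right endpoint. -/
lemma rpow_neg_le_sub_rpow_div (hs : 1 < s) {x : ℝ} (hx : 0 < x) :
    (x + 1) ^ (-s) ≤ (x ^ (1 - s) - (x + 1) ^ (1 - s)) / (s - 1) := by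
  have hpos : ∀ y ∈ Set.Icc x (x + 1), y ≠ 0 := fun y hy => (hx.trans_le hy.1).ne'
  obtain ⟨c, hc, hderiv⟩ := exists_hasDerivAt_eq_slope (fun y : ℝ => y ^ (1 - s))
    (fun y => (1 - s) * y ^ (1 - s - 1)) (lt_add_one x)
    (fun y hy => (Real.continuousAt_rpow_const y _ (Or.inl (hpos y hy))).continuousWithinAt)
    (fun y hy => Real.hasDerivAt_rpow_const (Or.inl (hpos y (Set.Ioo_subset_Icc_self hy))))
  have hc_rpow : (x + 1) ^ (-s) ≤ c ^ (-s) :=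
    Real.rpow_le_rpow_of_nonpos (hx.trans hc.1) hc.2.le (by linarith)
  rw [add_sub_cancel_left, div_one, show 1 - s - 1 = -s by ring] at hderiv
  rw [le_div_iff₀ (by linarith)]
  nlinarith

lemma sum_range_rpow_neg_le (hs : 1 < s) {a : ℝ} (ha : 0 < a) (N : ℕ) :
    ∑ j ∈ Finset.range N, (a + j) ^ (-s) ≤ a ^ (-s) + a ^ (1 - s) / (s - 1) := by
  cases N with
  | zero => simp only [Finset.range_zero, Finset.sum_empty]; positivity
  | succ N =>
    rw [Finset.sum_range_succ', Nat.cast_zero, add_zero, add_comm]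
    gcongr
    have htel : ∑ j ∈ Finset.range N, (a + ((j + 1 : ℕ) : ℝ)) ^ (-s)
        ≤ ∑ j ∈ Finset.range N,
            ((a + j) ^ (1 - s) / (s - 1) - (a + (j + 1 : ℕ)) ^ (1 - s) / (s - 1)) := by
      gcongr with j
      rw [← sub_div, Nat.cast_succ, ← add_assoc]
      exact rpow_neg_le_sub_rpow_div hs (by positivity)
    rw [Finset.sum_range_sub'] at htel
    have : 0 ≤ (a + N) ^ (1 - s) / (s - 1) := by have := hs; positivity
    simp only [Nat.cast_zero, add_zero] at htel
    linarith

lemma tsum_ite_lt_rpow_neg_le (hs : 1 < s) {K : ℝ} (hK : 1 ≤ K) :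
    ∑' m : ℕ, (if K < m then ENNReal.ofReal ((m : ℝ) ^ (-s)) else 0)
      ≤ ENNReal.ofReal (s / (s - 1) * K ^ (1 - s)) := by
  have hK0 : 0 < K := one_pos.trans_le hK
  set M := ⌊K⌋₊ + 1
  have hKM : K < M := by simp only [M]; push_cast; exact Nat.lt_floor_add_one K
  have hhead : ∀ m ∈ Finset.range M, ¬ K < m := fun m hm =>
    not_lt.2 ((Nat.cast_le.2 (Nat.lt_add_one_iff.1 (Finset.mem_range.1 hm))).trans
      (Nat.floor_le hK0.le))
  rw [← ENNReal.summable.sum_add_tsum_nat_add', Finset.sum_eq_zero fun m hm => if_neg (hhead m hm),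
    zero_add]
  refine ENNReal.tsum_le_of_sum_range_le fun N => ?_
  calc ∑ j ∈ Finset.range N,
        (if K < ((j + M : ℕ) : ℝ) then ENNReal.ofReal (((j + M : ℕ) : ℝ) ^ (-s)) else 0)
      ≤ ∑ j ∈ Finset.range N, ENNReal.ofReal ((K + j) ^ (-s)) := by
        gcongr with j
        split_ifs
        · exact ENNReal.ofReal_le_ofReal
            (Real.rpow_le_rpow_of_nonpos (by positivity) (by push_cast; linarith) (by linarith))
        · exact zero_le
    _ = ENNReal.ofReal (∑ j ∈ Finset.range N, (K + j) ^ (-s)) :=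
        (ENNReal.ofReal_sum_of_nonneg fun j _ => by positivity).symm
    _ ≤ ENNReal.ofReal (s / (s - 1) * K ^ (1 - s)) := by
        gcongr
        refine (sum_range_rpow_neg_le hs hK0 N).trans ?_
        have : K ^ (-s) ≤ K ^ (1 - s) := Real.rpow_le_rpow_of_exponent_le hK (by linarith)
        have hs1 : 0 < s - 1 := by linarith
        rw [show s / (s - 1) * K ^ (1 - s) = K ^ (1 - s) + K ^ (1 - s) / (s - 1) by
          field_simp; ring]
        linarith

end PSeriesTail

section L1Sphere

noncomputable def l1Sphere (n m : ℕ) : Finset (Fin n → ℤ) :=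
  (Fintype.piFinset fun _ => Finset.Icc (-(m : ℤ)) m).filter fun k => ∑ i, (k i).natAbs = m

lemma mem_l1Sphere {n m : ℕ} {k : Fin n → ℤ} : k ∈ l1Sphere n m ↔ ∑ i, (k i).natAbs = m := by
  refine ⟨fun hk => (Finset.mem_filter.1 hk).2, fun hk => Finset.mem_filter.2 ⟨?_, hk⟩⟩
  refine Fintype.mem_piFinset.2 fun i => Finset.mem_Icc.2 ?_
  have := Finset.single_le_sum (f := fun j => (k j).natAbs) (fun j _ => Nat.zero_le _)
    (Finset.mem_univ i)
  omega

/-- A point of the sphere is determined by its first `n` coordinates and the sign of the last. -/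
lemma card_l1Sphere_succ_le (n m : ℕ) : #(l1Sphere (n + 1) m) ≤ 2 * (2 * m + 1) ^ n := by
  set box := Fintype.piFinset fun _ : Fin n => Finset.Icc (-(m : ℤ)) m
  have hmaps : ∀ k ∈ l1Sphere (n + 1) m, (Fin.init k, decide (0 ≤ k (Fin.last n))) ∈
      box ×ˢ (Finset.univ : Finset Bool) := by
    intro k hk
    refine Finset.mem_product.2 ⟨Fintype.mem_piFinset.2 fun i => ?_, Finset.mem_univ _⟩
    exact Fintype.mem_piFinset.1 (Finset.mem_filter.1 hk).1 _
  have hinj : Set.InjOn (fun k : Fin (n + 1) → ℤ => (Fin.init k, decide (0 ≤ k (Fin.last n))))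
      (l1Sphere (n + 1) m) := by
    intro k₁ hk₁ k₂ hk₂ heq
    simp only [Prod.mk.injEq, decide_eq_decide] at heq
    obtain ⟨hinit, hsign⟩ := heq
    have hk₁ := mem_l1Sphere.1 hk₁
    have hk₂ := mem_l1Sphere.1 hk₂
    rw [Fin.sum_univ_castSucc] at hk₁ hk₂
    have : ∑ i : Fin n, (k₁ i.castSucc).natAbs = ∑ i : Fin n, (k₂ i.castSucc).natAbs :=
      Finset.sum_congr rfl fun i _ => by
        rw [show k₁ i.castSucc = k₂ i.castSucc from congrFun hinit i]
    have hlast : k₁ (Fin.last n) = k₂ (Fin.last n) := by omega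
    rw [← Fin.snoc_init_self k₁, ← Fin.snoc_init_self k₂, hinit, hlast]
  refine (Finset.card_le_card_of_injOn _ hmaps hinj).trans_eq ?_
  rw [Finset.card_product, Fintype.card_piFinset, Finset.prod_const, Int.card_Icc,
    Finset.card_univ, Fintype.card_fin, Finset.card_univ, Fintype.card_bool, mul_comm]
  congr 2
  omega

lemma card_l1Sphere_succ_le_pow {n m : ℕ} (hm : 1 ≤ m) :
    (#(l1Sphere (n + 1) m) : ℝ) ≤ 2 * 3 ^ n * (m : ℝ) ^ n := by
  have h : 2 * (2 * m + 1) ^ n ≤ 2 * (3 * m) ^ n := by gcongr; omega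
  calc (#(l1Sphere (n + 1) m) : ℝ) ≤ ((2 * (3 * m) ^ n : ℕ) : ℝ) := by
        exact_mod_cast (card_l1Sphere_succ_le n m).trans h
    _ = 2 * 3 ^ n * (m : ℝ) ^ n := by push_cast; ring

end L1Sphere

/-- With `a = ⟨k, ω₀⟩ + l Ω₀` and `b = ⟨k, ω₀⟩`, `a + t * b` is the small divisor of
`((1 + t) ω₀, Ω₀)`. -/
def resonantZone (σ a b η : ℝ) : Set ℝ := {t ∈ Set.Icc (-σ) σ | |a + t * b| < η}

section ResonantZone

variable {σ a b η δ t : ℝ}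

lemma resonantZone_bounds (hσ : σ ≤ 1 / 2) (ha : δ ≤ |a|) (hη : η ≤ δ / 2)
    (ht : t ∈ resonantZone σ a b η) : δ / 2 < σ * |b| ∧ |b| ≤ 2 * (η + |a - b|) := by
  obtain ⟨⟨hσt, htσ⟩, hsmall⟩ := ht
  have htb : |t * b| ≤ σ * |b| := by
    rw [abs_mul]; exact mul_le_mul_of_nonneg_right (abs_le.2 ⟨hσt, htσ⟩) (abs_nonneg b)
  have hshift : |(1 + t) * b| ≤ η + |a - b| := by
    calc |(1 + t) * b| = |(a + t * b) - (a - b)| := by ring_nf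
      _ ≤ |a + t * b| + |a - b| := abs_sub _ _
      _ ≤ η + |a - b| := by linarith
  have hhalf : |b| / 2 ≤ |(1 + t) * b| := by
    rw [abs_mul, abs_of_nonneg (show 0 ≤ 1 + t by linarith)]; nlinarith [abs_nonneg b]
  constructor
  · have h := abs_sub (a + t * b) (t * b)
    rw [add_sub_cancel_right] at h
    linarith
  · linarith

lemma volume_resonantZone_le (hσ : σ ≤ 1 / 2) (hδ : 0 < δ) (ha : δ ≤ |a|) (hη : η ≤ δ / 2) :
    volume (resonantZone σ a b η)
      ≤ if δ < 4 * σ * (η + |a - b|) then ENNReal.ofReal (4 * σ * η / δ) else 0 := by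
  rcases (resonantZone σ a b η).eq_empty_or_nonempty with hempty | ⟨t, ht⟩
  · simp [hempty]
  obtain ⟨hlow, hupp⟩ := resonantZone_bounds hσ ha hη ht
  have hη0 : 0 < η := (abs_nonneg _).trans_lt ht.2
  have hb : 0 < |b| := by
    by_contra! h
    nlinarith [abs_nonneg b, (abs_nonneg b).antisymm h]
  rw [if_pos (by nlinarith)]
  have hball : resonantZone σ a b η ⊆ Metric.ball (-a / b) (η / |b|) := by
    rintro t' ⟨-, ht'⟩
    have hb0 : b ≠ 0 := abs_pos.1 hb
    rw [Metric.mem_ball, Real.dist_eq, show t' - -a / b = (a + t' * b) / b by field_simp; ring,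
      abs_div]
    exact div_lt_div_of_pos_right ht' hb
  refine (measure_mono hball).trans ?_
  rw [Real.volume_ball]
  refine ENNReal.ofReal_le_ofReal ?_
  rw [mul_div_assoc', div_le_div_iff₀ hb hδ]
  nlinarith

end ResonantZone

section Diophantine

variable {n : ℕ}

lemma one_le_sum_abs_of_ne_zero {k : Fin n → ℤ} (hk : k ≠ 0) : 1 ≤ ∑ i, |(k i : ℝ)| := by
  obtain ⟨i, hi⟩ := Function.ne_iff.1 hk
  calc (1 : ℝ) ≤ |(k i : ℝ)| := by
        rw [← Int.cast_abs]; exact_mod_cast Int.one_le_abs hi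
    _ ≤ ∑ j, |(k j : ℝ)| :=
        Finset.single_le_sum (f := fun j => |(k j : ℝ)|) (fun j _ => abs_nonneg _)
          (Finset.mem_univ i)

lemma sum_abs_intCast_eq_natAbs (k : Fin n → ℤ) :
    ∑ i, |(k i : ℝ)| = ((∑ i, (k i).natAbs : ℕ) : ℝ) := by
  push_cast [Nat.cast_natAbs, Int.cast_abs]
  rfl

lemma div_rpow_le_div_rpow_of_le {a x τ τ' : ℝ} (ha : 0 ≤ a) (hx : 1 ≤ x) (hτ : τ ≤ τ') :
    a / x ^ τ' ≤ a / x ^ τ :=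
  div_le_div_of_nonneg_left ha (Real.rpow_pos_of_pos (one_pos.trans_le hx) τ)
    (Real.rpow_le_rpow_of_exponent_le hx hτ)

lemma TildeDio1_subset_TildeDio1 {α α' τ τ' : ℝ} (hα' : 0 ≤ α') (hαα' : α' ≤ α) (hτ : τ ≤ τ') :
    TildeDio1 n α τ ⊆ TildeDio1 n α' τ' := by
  rintro p ⟨hsmall, hnormal⟩
  refine ⟨fun k hk l hl => le_trans ?_ (hsmall k hk l hl),
    fun l h1 h2 => hαα'.trans (hnormal l h1 h2)⟩
  calc α' / (∑ i, |(k i : ℝ)|) ^ τ' ≤ α' / (∑ i, |(k i : ℝ)|) ^ τ :=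
        div_rpow_le_div_rpow_of_le hα' (one_le_sum_abs_of_ne_zero hk) hτ
    _ ≤ α / (∑ i, |(k i : ℝ)|) ^ τ := by gcongr

lemma sum_intCast_mul_smul_apply (k : Fin n → ℤ) (c : ℝ) (ω : Fin n → ℝ) :
    ∑ i, (k i : ℝ) * (c • ω) i = c * ∑ i, (k i : ℝ) * ω i := by
  simp only [Pi.smul_apply, smul_eq_mul, Finset.mul_sum, mul_left_comm]

variable {α τ σ Ω₀ : ℝ} {ω₀ : Fin n → ℝ}

lemma Icc_diff_subset_iUnion_resonantZone (hα : 0 < α) (hτ : -1 ≤ τ) (hσ : σ ≤ 1 / 2)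
    (hdio : (ω₀, Ω₀) ∈ TildeDio1 n α τ) :
    Set.Icc (-σ) σ \
        {t ∈ Set.Icc (-σ) σ | ((1 + t) • ω₀, Ω₀) ∈ TildeDio1 n (α / 2) (2 * τ + 1)} ⊆
      ⋃ m : ℕ, ⋃ k ∈ l1Sphere n m, ⋃ l ∈ ({-2, -1, 1, 2} : Finset ℤ),
        resonantZone σ (∑ i, (k i : ℝ) * ω₀ i + l * Ω₀) (∑ i, (k i : ℝ) * ω₀ i)
          (α / 2 / (m : ℝ) ^ (2 * τ + 1)) := by
  rintro t ⟨ht, hbad⟩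
  obtain ⟨k, hk, l, hl, hlt⟩ : ∃ k : Fin n → ℤ, k ≠ 0 ∧ ∃ l : ℤ, |l| ≤ 2 ∧
      |∑ i, (k i : ℝ) * ((1 + t) • ω₀) i + l * Ω₀|
        < α / 2 / (∑ i, |(k i : ℝ)|) ^ (2 * τ + 1) := by
    by_contra! h
    exact hbad ⟨ht, h, fun l h1 h2 => (half_le_self hα.le).trans (hdio.2 l h1 h2)⟩
  rw [sum_intCast_mul_smul_apply] at hlt
  have hl0 : l ≠ 0 := by
    rintro rfl
    have hdiv := hdio.1 k hk 0 (by norm_num)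
    have hexp := div_rpow_le_div_rpow_of_le hα.le (one_le_sum_abs_of_ne_zero hk)
      (show τ ≤ 2 * τ + 1 by linarith)
    simp only [Int.cast_zero, zero_mul, add_zero, abs_mul] at hdiv hlt
    rw [abs_of_nonneg (show 0 ≤ 1 + t by linarith [ht.1])] at hlt
    have hhalf := mul_le_mul_of_nonneg_right (show 1 / 2 ≤ 1 + t by linarith [ht.1])
      (abs_nonneg (∑ i, (k i : ℝ) * ω₀ i))
    rw [div_right_comm] at hlt
    linarith
  refine Set.mem_iUnion.2 ⟨_, Set.mem_iUnion₂.2 ⟨k, mem_l1Sphere.2 rfl,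
    Set.mem_iUnion₂.2 ⟨l, ?_, ht, ?_⟩⟩⟩
  · simp only [Finset.mem_insert, Finset.mem_singleton]
    rw [abs_le] at hl
    omega
  · rw [add_mul, one_mul, add_right_comm] at hlt
    rwa [← sum_abs_intCast_eq_natAbs]

lemma volume_resonantZone_le_of_mem_l1Sphere {m : ℕ} (hα : 0 < α) (hτ : 0 < τ) (hσ : 0 < σ)
    (hσ2 : σ ≤ 1 / 2) (hdio : (ω₀, Ω₀) ∈ TildeDio1 n α τ) {k : Fin n → ℤ} (hk : k ∈ l1Sphere n m)
    {l : ℤ} (hl : l ∈ ({-2, -1, 1, 2} : Finset ℤ)) :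
    volume (resonantZone σ (∑ i, (k i : ℝ) * ω₀ i + l * Ω₀) (∑ i, (k i : ℝ) * ω₀ i)
        (α / 2 / (m : ℝ) ^ (2 * τ + 1)))
      ≤ if (α / (2 * σ * (α + 4 * |Ω₀|))) ^ τ⁻¹ < m
        then ENNReal.ofReal (2 * σ / (m : ℝ) ^ (τ + 1)) else 0 := by
  rcases m.eq_zero_or_pos with rfl | hm
  · have hempty : ∀ a b, resonantZone σ a b 0 = ∅ := fun a b =>
      Set.eq_empty_of_forall_notMem fun t ht => (abs_nonneg _).not_gt ht.2
    rw [Nat.cast_zero, Real.zero_rpow (by linarith), div_zero, hempty, measure_empty]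
    exact zero_le
  have hm0 : (0 : ℝ) < m := Nat.cast_pos.2 hm
  have hk0 : k ≠ 0 := by
    rintro rfl
    simp [mem_l1Sphere] at hk
    omega
  have hnorm : ∑ i, |(k i : ℝ)| = m := by rw [sum_abs_intCast_eq_natAbs, mem_l1Sphere.1 hk]
  have hl2 : |l| ≤ 2 := by
    simp only [Finset.mem_insert, Finset.mem_singleton] at hl
    rcases hl with rfl | rfl | rfl | rfl <;> norm_num
  have hdiv := hdio.1 k hk0 l hl2
  rw [hnorm] at hdiv
  dsimp only at hdiv
  have hη : α / 2 / (m : ℝ) ^ (2 * τ + 1) ≤ α / (m : ℝ) ^ τ / 2 := by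
    rw [div_right_comm]
    exact div_le_div_of_nonneg_right
      (div_rpow_le_div_rpow_of_le hα.le (Nat.one_le_cast.2 hm) (by linarith)) zero_le_two
  refine (volume_resonantZone_le hσ2 (by positivity) hdiv hη).trans ?_
  rw [add_sub_cancel_left]
  split_ifs with hres hK
  · refine ENNReal.ofReal_le_ofReal (le_of_eq ?_)
    rw [show 2 * τ + 1 = τ + (τ + 1) by ring, Real.rpow_add hm0]
    field_simp
    ring
  · refine absurd ((Real.rpow_inv_lt_iff_of_pos (by positivity) hm0.le hτ).2 ?_) hK
    have hlΩ : |(l : ℝ) * Ω₀| ≤ 2 * |Ω₀| := by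
      rw [abs_mul, ← Int.cast_abs]
      exact mul_le_mul_of_nonneg_right (by exact_mod_cast hl2) (abs_nonneg _)
    have hηα : α / 2 / (m : ℝ) ^ (2 * τ + 1) ≤ α / 2 :=
      div_le_self (by positivity) (Real.one_le_rpow (Nat.one_le_cast.2 hm) (by linarith))
    have hM : 4 * σ * (α / 2 / (m : ℝ) ^ (2 * τ + 1) + |(l : ℝ) * Ω₀|)
        ≤ 2 * σ * (α + 4 * |Ω₀|) := by nlinarith
    rw [div_lt_iff₀ (by positivity)] at hres
    rw [div_lt_iff₀ (by positivity)]
    nlinarith [mul_le_mul_of_nonneg_right hM (Real.rpow_nonneg hm0.le τ)]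
  all_goals exact zero_le
end Diophantine

section Measure

variable {n : ℕ} {α τ σ Ω₀ : ℝ} {ω₀ : Fin (n + 1) → ℝ}

lemma sum_volume_resonantZone_l1Sphere_le (hα : 0 < α) (hτ : 0 < τ)
    (hσ : 0 < σ) (hσ2 : σ ≤ 1 / 2) (hdio : (ω₀, Ω₀) ∈ TildeDio1 (n + 1) α τ) (m : ℕ) :
    ∑ k ∈ l1Sphere (n + 1) m, ∑ l ∈ ({-2, -1, 1, 2} : Finset ℤ),
        volume (resonantZone σ (∑ i, (k i : ℝ) * ω₀ i + l * Ω₀) (∑ i, (k i : ℝ) * ω₀ i)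
          (α / 2 / (m : ℝ) ^ (2 * τ + 1)))
      ≤ ENNReal.ofReal (16 * 3 ^ n * σ) *
        if (α / (2 * σ * (α + 4 * |Ω₀|))) ^ τ⁻¹ < m
        then ENNReal.ofReal ((m : ℝ) ^ (-(τ + 1 - n))) else 0 := by
  refine (Finset.sum_le_sum fun k hk => Finset.sum_le_sum fun l hl =>
    volume_resonantZone_le_of_mem_l1Sphere hα hτ hσ hσ2 hdio hk hl).trans ?_
  rw [Finset.sum_const, Finset.sum_const, show #({-2, -1, 1, 2} : Finset ℤ) = 4 from rfl]
  split_ifs with hK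
  · have hm : 1 ≤ m := by
      have : (0 : ℝ) < m := (Real.rpow_nonneg (by positivity) _).trans_lt hK
      exact_mod_cast this
    have hm0 : (0 : ℝ) < m := Nat.cast_pos.2 hm
    rw [nsmul_eq_mul, nsmul_eq_mul, ← ENNReal.ofReal_natCast, ← ENNReal.ofReal_natCast,
      ← ENNReal.ofReal_mul (by positivity), ← ENNReal.ofReal_mul (by positivity),
      ← ENNReal.ofReal_mul (by positivity)]
    refine ENNReal.ofReal_le_ofReal ?_
    have hpow : (m : ℝ) ^ n / (m : ℝ) ^ (τ + 1) = (m : ℝ) ^ (-(τ + 1 - n)) := by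
      rw [← Real.rpow_natCast, ← Real.rpow_sub hm0]; ring_nf
    calc (#(l1Sphere (n + 1) m) : ℝ) * ((4 : ℕ) * (2 * σ / (m : ℝ) ^ (τ + 1)))
        ≤ 2 * 3 ^ n * (m : ℝ) ^ n * ((4 : ℕ) * (2 * σ / (m : ℝ) ^ (τ + 1))) := by
          gcongr; exact card_l1Sphere_succ_le_pow hm
      _ = 16 * 3 ^ n * σ * ((m : ℝ) ^ n / (m : ℝ) ^ (τ + 1)) := by push_cast; ring
      _ = 16 * 3 ^ n * σ * (m : ℝ) ^ (-(τ + 1 - n)) := by rw [hpow]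
  · simp

theorem volume_Icc_diff_setOf_smul_mem_TildeDio1_le (hα : 0 < α) (hτ : (n : ℝ) < τ) (hσ : 0 < σ)
    (hσ2 : σ ≤ 1 / 2) (hσα : σ ≤ α / (2 * (α + 4 * |Ω₀|))) (hdio : (ω₀, Ω₀) ∈ TildeDio1 (n + 1) α τ) :
    volume (Set.Icc (-σ) σ \
        {t ∈ Set.Icc (-σ) σ | ((1 + t) • ω₀, Ω₀) ∈ TildeDio1 (n + 1) (α / 2) (2 * τ + 1)})
      ≤ ENNReal.ofReal (16 * 3 ^ n * ((τ + 1 - n) / (τ - n)) *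
          (2 * (α + 4 * |Ω₀|)) ^ ((τ - ((n + 1 : ℕ) : ℝ) + 1) / τ) * σ *
          (σ / α) ^ ((τ - ((n + 1 : ℕ) : ℝ) + 1) / τ)) := by
  have hτ0 : 0 < τ := (Nat.cast_nonneg n).trans_lt hτ
  set M := α + 4 * |Ω₀|
  set K := (α / (2 * σ * M)) ^ τ⁻¹
  have hK : 1 ≤ K := Real.one_le_rpow
    (by rw [le_div_iff₀ (by positivity)]; rw [le_div_iff₀ (by positivity)] at hσα; linarith)
    (inv_nonneg.2 hτ0.le)
  have hs : 1 < τ + 1 - n := by linarith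
  have hKpow : K ^ (1 - (τ + 1 - n)) = (2 * M) ^ ((τ - ((n + 1 : ℕ) : ℝ) + 1) / τ) *
      (σ / α) ^ ((τ - ((n + 1 : ℕ) : ℝ) + 1) / τ) := by
    rw [← Real.mul_rpow (by positivity) (by positivity), ← Real.rpow_mul (by positivity),
      show τ⁻¹ * (1 - (τ + 1 - n)) = -((τ - ((n + 1 : ℕ) : ℝ) + 1) / τ) by push_cast; ring,
      Real.rpow_neg (by positivity), ← Real.inv_rpow (by positivity), inv_div]
    congr 1
    field_simp
  calc _ ≤ volume (⋃ m : ℕ, ⋃ k ∈ l1Sphere (n + 1) m, ⋃ l ∈ ({-2, -1, 1, 2} : Finset ℤ),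
        resonantZone σ (∑ i, (k i : ℝ) * ω₀ i + l * Ω₀) (∑ i, (k i : ℝ) * ω₀ i)
          (α / 2 / (m : ℝ) ^ (2 * τ + 1))) :=
        measure_mono (Icc_diff_subset_iUnion_resonantZone hα (by linarith) hσ2 hdio)
    _ ≤ ∑' m : ℕ, ∑ k ∈ l1Sphere (n + 1) m, ∑ l ∈ ({-2, -1, 1, 2} : Finset ℤ),
        volume (resonantZone σ (∑ i, (k i : ℝ) * ω₀ i + l * Ω₀) (∑ i, (k i : ℝ) * ω₀ i)
          (α / 2 / (m : ℝ) ^ (2 * τ + 1))) :=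
        (measure_iUnion_le _).trans (ENNReal.tsum_le_tsum fun m =>
          (measure_biUnion_finset_le _ _).trans
            (Finset.sum_le_sum fun k _ => measure_biUnion_finset_le _ _))
    _ ≤ ∑' m : ℕ, ENNReal.ofReal (16 * 3 ^ n * σ) *
        if K < m then ENNReal.ofReal ((m : ℝ) ^ (-(τ + 1 - n))) else 0 :=
        ENNReal.tsum_le_tsum (sum_volume_resonantZone_l1Sphere_le hα hτ0 hσ hσ2 hdio)
    _ ≤ ENNReal.ofReal (16 * 3 ^ n * σ) *
        ENNReal.ofReal ((τ + 1 - n) / (τ + 1 - n - 1) * K ^ (1 - (τ + 1 - n))) := by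
        rw [ENNReal.tsum_mul_left]
        gcongr
        exact tsum_ite_lt_rpow_neg_le hs hK
    _ = _ := by
        rw [← ENNReal.ofReal_mul (by positivity), hKpow]
        congr 1
        ring

end Measure

theorem stmt11_general (n : ℕ) (τ α : ℝ) (hτ : (n : ℝ) - 1 < τ) (hα : 0 < α)
    (ω₀ : Fin n → ℝ) (Ω₀ : ℝ) (hdio : (ω₀, Ω₀) ∈ TildeDio1 n α τ) :
    ∃ c > 0, ∃ σ₀ > 0, ∀ σ : ℝ, 0 < σ → σ ≤ σ₀ →
      ∃ S : Set ℝ,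
        S = {lam ∈ Set.Icc (-σ) σ | ((1 + lam) • ω₀, Ω₀) ∈ TildeDio1 n (α / 2) (2 * τ + 1)} ∧
        S.Nonempty ∧
        volume (Set.Icc (-σ) σ \ S)
          ≤ ENNReal.ofReal (c * σ * (σ / α) ^ ((τ - (n : ℝ) + 1) / τ)) := by
  have hzero : ∀ σ : ℝ, 0 < σ → (0 : ℝ) ∈
      {lam ∈ Set.Icc (-σ) σ | ((1 + lam) • ω₀, Ω₀) ∈ TildeDio1 n (α / 2) (2 * τ + 1)} :=
    fun σ hσ => ⟨⟨by linarith, hσ.le⟩, by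
      rw [add_zero, one_smul]
      exact TildeDio1_subset_TildeDio1 (by positivity) (half_le_self hα.le)
        (by linarith [(Nat.cast_nonneg n : (0 : ℝ) ≤ n)]) hdio⟩
  rcases n with _ | n
  · refine ⟨1, one_pos, 1, one_pos, fun σ hσ _ => ⟨_, rfl, ⟨0, hzero σ hσ⟩, ?_⟩⟩
    have hall : Set.Icc (-σ) σ ⊆
        {lam ∈ Set.Icc (-σ) σ | ((1 + lam) • ω₀, Ω₀) ∈ TildeDio1 0 (α / 2) (2 * τ + 1)} :=
      fun t ht => ⟨ht, fun k hk => absurd (Subsingleton.elim k 0) hk,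
        fun l h1 h2 => (half_le_self hα.le).trans (hdio.2 l h1 h2)⟩
    rw [Set.sdiff_eq_empty.2 hall, measure_empty]
    exact zero_le
  · have hnτ : (n : ℝ) < τ := by push_cast at hτ; linarith
    have hratio : 0 < (τ + 1 - n) / (τ - n) := div_pos (by linarith) (by linarith)
    refine ⟨16 * 3 ^ n * ((τ + 1 - n) / (τ - n)) *
        (2 * (α + 4 * |Ω₀|)) ^ ((τ - ((n + 1 : ℕ) : ℝ) + 1) / τ), by positivity,
      min (1 / 2) (α / (2 * (α + 4 * |Ω₀|))), by positivity,
      fun σ hσ hσ₀ => ⟨_, rfl, ⟨0, hzero σ hσ⟩, ?_⟩⟩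
    exact volume_Icc_diff_setOf_smul_mem_TildeDio1_le hα hnτ hσ (hσ₀.trans (min_le_left _ _))
      (hσ₀.trans (min_le_right _ _)) hdio

/-- If (ω₀, Ω₀) ∈ Õ_{α,τ} then for sufficiently small σ the set
I⋆_σ = {λ ∈ [−σ,σ] : ((1+λ)ω₀, Ω₀) ∈ Õ_{α/2, 2τ+1}} is non-empty and
meas([−σ,σ] ∖ I⋆_σ) ≤ c σ (σ/α)^{(τ−n+1)/τ}. -/
theorem stmt11 (n : ℕ) (τ α : ℝ) (hτ : (n : ℝ) - 1 < τ) (hα : 0 < α) (hα1 : α < 1)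
    (ω₀ : Fin n → ℝ) (Ω₀ : ℝ) (hdio : (ω₀, Ω₀) ∈ TildeDio1 n α τ) :
    ∃ c > 0, ∃ σ₀ > 0, ∀ σ : ℝ, 0 < σ → σ ≤ σ₀ →
      ∃ S : Set ℝ,
        S = {lam ∈ Set.Icc (-σ) σ | ((1 + lam) • ω₀, Ω₀) ∈ TildeDio1 n (α / 2) (2 * τ + 1)} ∧
        S.Nonempty ∧
        volume (Set.Icc (-σ) σ \ S)
          ≤ ENNReal.ofReal (c * σ * (σ / α) ^ ((τ - (n : ℝ) + 1) / τ)) :=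
  stmt11_general n τ α hτ hα ω₀ Ω₀ hdio
end

section
/- Let ρ_j = ρ₀·2^{−j}, K_j defined by e^{−K_j ρ_j} = E_j where E_{j+1} = c̃·E_j^{3/2} with c̃ ≥ 1 and 0 < E₀ < 1. Then K_{j+1}/K_j = (2 ln c̃ + 3 ln E_j)/ln E_j, and if E_j ≤ c̃^{−2} for all j this ratio is at most 3; hence setting F_j = 2^{j+3} K_j^{τ+1} ε_j/r_j with ε_j = E_j α_j r_j ρ_j^{τ'} and α_j ≤ α, one has F_{j+1} ≤ c·E_j^{1/2}·F_j, so that if E₀ is sufficiently small then F_j ≤ α for all j ≥ 0. -/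
/-!
Since `K_j = -log E_j / ρ_j`, halving `ρ` and `log E_{j+1} = log c̃ + (3/2) log E_j` give
`K_{j+1} = -(2 log c̃ + 3 log E_j) / ρ_j`, which is the ratio formula and, as `log c̃ ≥ 0`,
`K_{j+1} ≤ 3 K_j`. Passing from `F_j` to `F_{j+1}` multiplies the factors `2^{j+3}`, `K_j^{τ+1}`,
`α_j`, `ρ_j^{τ'}` by at most `2`, `3^{τ+1}`, `4/3`, `1`, and `E_j` by exactly `c̃ E_j^{1/2}`.
Under `E_j ≤ c̃^{-2}` the sequence `E` decreases, so `c E_0^{1/2} ≤ 1` makes `F` decrease as well,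
and `F_0 ≤ α` for small `E_0` because `(-log E_0)^{τ+1} E_0 = O(E_0^{1/2})`.
-/

open Real

namespace KAM

theorem rpow_half_le_of_le_sq {x y : ℝ} (hy : 0 ≤ y) (h : x ≤ y ^ 2) : x ^ (1 / 2 : ℝ) ≤ y := by
  rw [← sqrt_eq_rpow]
  exact (sqrt_le_left hy).mpr h

/-- From `log y ≤ y^s / s` at `y = x⁻¹`, `s = 1 / (2p)`. -/
theorem neg_log_rpow_mul_le {x p : ℝ} (hx0 : 0 < x) (hx1 : x ≤ 1) (hp : 0 < p) :
    (-log x) ^ p * x ≤ (2 * p) ^ p * x ^ (1 / 2 : ℝ) := by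
  have hlog : -log x ≤ 2 * p * x ^ (-(2 * p)⁻¹) := by
    have := log_le_rpow_div (inv_nonneg.mpr hx0.le) (inv_pos.mpr (mul_pos two_pos hp))
    rwa [log_inv, inv_rpow hx0.le, ← rpow_neg hx0.le, div_inv_eq_mul, mul_comm] at this
  calc (-log x) ^ p * x ≤ (2 * p * x ^ (-(2 * p)⁻¹)) ^ p * x := by
        gcongr
        linarith [log_nonpos hx0.le hx1]
    _ = (2 * p) ^ p * x ^ (1 / 2 : ℝ) := by
        rw [mul_rpow (by positivity) (by positivity), ← rpow_mul hx0.le, mul_assoc,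
          ← rpow_add_one hx0.ne']
        congr 2
        field_simp
        ring

noncomputable def alpha (α : ℝ) (j : ℕ) : ℝ := (1 - (2 ^ (j + 2) : ℝ)⁻¹) * α

theorem alpha_zero (α : ℝ) : alpha α 0 = 3 / 4 * α := by
  norm_num [alpha]

theorem alpha_nonneg {α : ℝ} (hα : 0 ≤ α) (j : ℕ) : 0 ≤ alpha α j := by
  have : (2 ^ (j + 2) : ℝ)⁻¹ ≤ 1 := inv_le_one_of_one_le₀ (one_le_pow₀ one_le_two)
  unfold alpha
  nlinarith

theorem alpha_succ_le {α : ℝ} (hα : 0 ≤ α) (j : ℕ) : alpha α (j + 1) ≤ 4 / 3 * alpha α j := by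
  have h4 : (2 ^ (j + 2) : ℝ)⁻¹ ≤ 4⁻¹ := by
    gcongr
    calc (4 : ℝ) = 2 ^ 2 := by norm_num
      _ ≤ 2 ^ (j + 2) := pow_le_pow_right₀ one_le_two (by omega)
  calc alpha α (j + 1) ≤ 1 * α := by
        unfold alpha
        gcongr
        exact sub_le_self _ (by positivity)
    _ ≤ 4 / 3 * alpha α j := by
        unfold alpha
        nlinarith

structure Scheme (ctil ρ₀ : ℝ) (E ρ K : ℕ → ℝ) : Prop where
  one_le_ctil : 1 ≤ ctil
  ρ₀_pos : 0 < ρ₀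
  E_succ : ∀ j, E (j + 1) = ctil * E j ^ (3 / 2 : ℝ)
  ρ_eq : ∀ j, ρ j = ρ₀ / 2 ^ j
  exp_neg_K_mul : ∀ j, exp (-(K j * ρ j)) = E j

namespace Scheme

variable {ctil ρ₀ : ℝ} {E ρ K : ℕ → ℝ}

theorem ρ_pos (h : Scheme ctil ρ₀ E ρ K) (j : ℕ) : 0 < ρ j := by
  rw [h.ρ_eq]
  exact div_pos h.ρ₀_pos (pow_pos two_pos j)

theorem ρ_zero (h : Scheme ctil ρ₀ E ρ K) : ρ 0 = ρ₀ := by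
  simp [h.ρ_eq]

theorem ρ_succ (h : Scheme ctil ρ₀ E ρ K) (j : ℕ) : ρ (j + 1) = ρ j / 2 := by
  rw [h.ρ_eq, h.ρ_eq, pow_succ, div_div]

theorem E_pos (h : Scheme ctil ρ₀ E ρ K) (j : ℕ) : 0 < E j :=
  h.exp_neg_K_mul j ▸ exp_pos _

theorem K_eq (h : Scheme ctil ρ₀ E ρ K) (j : ℕ) : K j = -log (E j) / ρ j := by
  rw [← h.exp_neg_K_mul j, log_exp, neg_neg, mul_div_cancel_right₀ _ (h.ρ_pos j).ne']

theorem log_E_succ (h : Scheme ctil ρ₀ E ρ K) (j : ℕ) :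
    log (E (j + 1)) = log ctil + 3 / 2 * log (E j) := by
  have hctil : 0 < ctil := zero_lt_one.trans_le h.one_le_ctil
  rw [h.E_succ, log_mul hctil.ne' (rpow_pos_of_pos (h.E_pos j) _).ne', log_rpow (h.E_pos j)]

theorem K_succ (h : Scheme ctil ρ₀ E ρ K) (j : ℕ) :
    K (j + 1) = -(2 * log ctil + 3 * log (E j)) / ρ j := by
  rw [h.K_eq, h.ρ_succ, h.log_E_succ]
  field_simp [(h.ρ_pos j).ne']

theorem K_succ_div_K (h : Scheme ctil ρ₀ E ρ K) (j : ℕ) :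
    K (j + 1) / K j = (2 * log ctil + 3 * log (E j)) / log (E j) := by
  rw [h.K_succ, h.K_eq, div_div_div_cancel_right₀ (h.ρ_pos j).ne', neg_div_neg_eq]

theorem K_succ_le (h : Scheme ctil ρ₀ E ρ K) (j : ℕ) : K (j + 1) ≤ 3 * K j := by
  rw [h.K_succ, h.K_eq, mul_div_assoc']
  gcongr
  · exact (h.ρ_pos j).le
  · linarith [log_nonneg h.one_le_ctil]

theorem K_nonneg (h : Scheme ctil ρ₀ E ρ K) {j : ℕ} (hE : E j ≤ 1) : 0 ≤ K j := by
  rw [h.K_eq]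
  exact div_nonneg (neg_nonneg.mpr (log_nonpos (h.E_pos j).le hE)) (h.ρ_pos j).le

theorem K_succ_div_K_le (h : Scheme ctil ρ₀ E ρ K) {j : ℕ} (hE : E j ≤ 1) :
    K (j + 1) / K j ≤ 3 :=
  div_le_of_le_mul₀ (h.K_nonneg hE) zero_le_three (h.K_succ_le j)

theorem E_succ_eq (h : Scheme ctil ρ₀ E ρ K) (j : ℕ) :
    E (j + 1) = ctil * E j ^ (1 / 2 : ℝ) * E j := by
  rw [h.E_succ, mul_assoc, ← rpow_add_one (h.E_pos j).ne']
  norm_num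

theorem E_succ_le (h : Scheme ctil ρ₀ E ρ K) {j : ℕ} (hE : E j ≤ ctil⁻¹ ^ 2) :
    E (j + 1) ≤ E j := by
  have hctil : 0 < ctil := zero_lt_one.trans_le h.one_le_ctil
  have hsqrt : ctil * E j ^ (1 / 2 : ℝ) ≤ 1 := by
    calc ctil * E j ^ (1 / 2 : ℝ) ≤ ctil * ctil⁻¹ := by
          gcongr
          exact rpow_half_le_of_le_sq (inv_nonneg.mpr hctil.le) hE
      _ = 1 := mul_inv_cancel₀ hctil.ne'
  rw [h.E_succ_eq]
  exact mul_le_of_le_one_left (h.E_pos j).le hsqrt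

theorem E_le_one (h : Scheme ctil ρ₀ E ρ K) {j : ℕ} (hE : E j ≤ ctil⁻¹ ^ 2) : E j ≤ 1 :=
  hE.trans (pow_le_one₀ (inv_nonneg.mpr (zero_le_one.trans h.one_le_ctil))
    (inv_le_one_of_one_le₀ h.one_le_ctil))

theorem E_antitone (h : Scheme ctil ρ₀ E ρ K) (hE : ∀ j, E j ≤ ctil⁻¹ ^ 2) : Antitone E :=
  antitone_nat_of_succ_le fun j => h.E_succ_le (hE j)

end Scheme

/-- The paper's `F_j = 2^{j+3} K_j^{τ+1} ε_j / r_j` after substituting `ε_j` and cancelling `r_j`. -/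
noncomputable def smallness (τ τ' α : ℝ) (E ρ K : ℕ → ℝ) (j : ℕ) : ℝ :=
  2 ^ (j + 3) * K j ^ (τ + 1) * (E j * alpha α j * ρ j ^ τ')

noncomputable def growthConst (τ ctil : ℝ) : ℝ := 8 / 3 * 3 ^ (τ + 1) * ctil

noncomputable def initialThreshold (τ τ' ρ₀ : ℝ) : ℝ :=
  ρ₀ ^ (τ + 1 - τ') / (6 * (2 * (τ + 1)) ^ (τ + 1))

theorem growthConst_pos {τ ctil : ℝ} (hctil : 0 < ctil) : 0 < growthConst τ ctil := by
  unfold growthConst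
  positivity

theorem initialThreshold_pos {τ τ' ρ₀ : ℝ} (hτ : 0 < τ + 1) (hρ₀ : 0 < ρ₀) :
    0 < initialThreshold τ τ' ρ₀ := by
  unfold initialThreshold
  positivity

variable {τ τ' α ctil ρ₀ : ℝ} {E ρ K : ℕ → ℝ}

theorem smallness_nonneg (h : Scheme ctil ρ₀ E ρ K) (hα : 0 ≤ α) {j : ℕ} (hE : E j ≤ 1) :
    0 ≤ smallness τ τ' α E ρ K j := by
  have := h.K_nonneg hE
  have := h.E_pos j
  have := h.ρ_pos j
  have := alpha_nonneg hα j
  unfold smallness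
  positivity

theorem smallness_succ_le (h : Scheme ctil ρ₀ E ρ K) (hτ : 0 ≤ τ + 1) (hτ' : 0 ≤ τ')
    (hα : 0 ≤ α) {j : ℕ} (hE : E j ≤ ctil⁻¹ ^ 2) :
    smallness τ τ' α E ρ K (j + 1)
      ≤ growthConst τ ctil * E j ^ (1 / 2 : ℝ) * smallness τ τ' α E ρ K j := by
  have hE1 := h.E_le_one hE
  have hK := h.K_nonneg hE1
  have := h.ρ_pos j
  have := h.ρ_pos (j + 1)
  have := h.E_pos j
  have := alpha_nonneg hα j
  have := alpha_nonneg hα (j + 1)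
  have := zero_le_one.trans h.one_le_ctil
  have hK3 : K (j + 1) ^ (τ + 1) ≤ 3 ^ (τ + 1) * K j ^ (τ + 1) := by
    rw [← mul_rpow zero_le_three hK]
    exact rpow_le_rpow (h.K_nonneg ((h.E_succ_le hE).trans hE1)) (h.K_succ_le j) hτ
  have hρ' : ρ (j + 1) ^ τ' ≤ ρ j ^ τ' := by
    rw [h.ρ_succ]
    exact rpow_le_rpow (by positivity) (by linarith) hτ'
  calc smallness τ τ' α E ρ K (j + 1)
      = 2 * 2 ^ (j + 3) * K (j + 1) ^ (τ + 1)
          * (ctil * E j ^ (1 / 2 : ℝ) * E j * alpha α (j + 1) * ρ (j + 1) ^ τ') := by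
        rw [smallness, h.E_succ_eq]
        ring
    _ ≤ 2 * 2 ^ (j + 3) * (3 ^ (τ + 1) * K j ^ (τ + 1))
          * (ctil * E j ^ (1 / 2 : ℝ) * E j * (4 / 3 * alpha α j) * ρ j ^ τ') := by
        gcongr
        exact alpha_succ_le hα j
    _ = growthConst τ ctil * E j ^ (1 / 2 : ℝ) * smallness τ τ' α E ρ K j := by
        rw [growthConst, smallness]
        ring

theorem smallness_zero_le (h : Scheme ctil ρ₀ E ρ K) (hτ : 0 < τ + 1) (hα : 0 ≤ α)
    (hE1 : E 0 ≤ 1) (hE : E 0 ≤ initialThreshold τ τ' ρ₀ ^ 2) :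
    smallness τ τ' α E ρ K 0 ≤ α := by
  have hρ₀ := h.ρ₀_pos
  have hlog : 0 ≤ -log (E 0) := neg_nonneg.mpr (log_nonpos (h.E_pos 0).le hE1)
  calc smallness τ τ' α E ρ K 0
      = 6 * α * ρ₀ ^ τ' / ρ₀ ^ (τ + 1) * ((-log (E 0)) ^ (τ + 1) * E 0) := by
        rw [smallness, alpha_zero, h.K_eq, h.ρ_zero, div_rpow hlog hρ₀.le]
        ring
    _ ≤ 6 * α * ρ₀ ^ τ' / ρ₀ ^ (τ + 1) * ((2 * (τ + 1)) ^ (τ + 1) * E 0 ^ (1 / 2 : ℝ)) := by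
        gcongr 6 * α * ρ₀ ^ τ' / ρ₀ ^ (τ + 1) * ?_
        exact neg_log_rpow_mul_le (h.E_pos 0) hE1 hτ
    _ ≤ 6 * α * ρ₀ ^ τ' / ρ₀ ^ (τ + 1)
          * ((2 * (τ + 1)) ^ (τ + 1) * initialThreshold τ τ' ρ₀) := by
        gcongr
        exact rpow_half_le_of_le_sq (initialThreshold_pos hτ hρ₀).le hE
    _ = α := by
        rw [initialThreshold, rpow_sub hρ₀]
        field_simp

theorem smallness_le (h : Scheme ctil ρ₀ E ρ K) (hτ : 0 < τ + 1) (hτ' : 0 ≤ τ') (hα : 0 ≤ α)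
    (hE : ∀ j, E j ≤ ctil⁻¹ ^ 2)
    (hE₀ : E 0 ≤ min ((growthConst τ ctil)⁻¹ ^ 2) (initialThreshold τ τ' ρ₀ ^ 2)) (j : ℕ) :
    smallness τ τ' α E ρ K j ≤ α := by
  have hc := growthConst_pos (τ := τ) (zero_lt_one.trans_le h.one_le_ctil)
  have hcE : ∀ i, growthConst τ ctil * E i ^ (1 / 2 : ℝ) ≤ 1 := fun i => by
    calc growthConst τ ctil * E i ^ (1 / 2 : ℝ)
        ≤ growthConst τ ctil * (growthConst τ ctil)⁻¹ := by
          gcongr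
          exact rpow_half_le_of_le_sq (inv_nonneg.mpr hc.le)
            ((h.E_antitone hE (Nat.zero_le i)).trans (hE₀.trans (min_le_left _ _)))
      _ = 1 := mul_inv_cancel₀ hc.ne'
  have hanti : Antitone (smallness τ τ' α E ρ K) := antitone_nat_of_succ_le fun i =>
    (smallness_succ_le h hτ.le hτ' hα (hE i)).trans
      (mul_le_of_le_one_left (smallness_nonneg h hα (h.E_le_one (hE i))) (hcE i))
  exact (hanti (Nat.zero_le j)).trans
    (smallness_zero_le h hτ hα (h.E_le_one (hE 0)) (hE₀.trans (min_le_right _ _)))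

end KAM

theorem stmt18_general (τ τ' α ρ₀ ctil : ℝ) (hρ₀ : 0 < ρ₀) (hτ : 0 < τ) (hτ' : 0 < τ')
    (hα : 0 < α) (hctil : 1 ≤ ctil) :
    ∃ c > 0, ∃ E₀max > 0,
      ∀ (E ρ K r αseq ε F : ℕ → ℝ),
        (0 < E 0) → (E 0 < 1) →
        (∀ j, E (j + 1) = ctil * E j ^ ((3 : ℝ) / 2)) →
        (∀ j, ρ j = ρ₀ * 2 ^ (-(j : ℝ))) →
        (∀ j, Real.exp (-(K j * ρ j)) = E j) →
        (∀ j, 0 < r j) →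
        (∀ j, αseq j = (1 - 2 ^ (-((j : ℝ) + 2))) * α) →
        (∀ j, ε j = E j * αseq j * r j * ρ j ^ τ') →
        (∀ j, F j = 2 ^ ((j : ℝ) + 3) * K j ^ (τ + 1) * ε j / r j) →
        ((∀ j, E j ≠ 1 →
            K (j + 1) / K j
              = (2 * Real.log ctil + 3 * Real.log (E j)) / Real.log (E j)) ∧
         ((∀ j, E j ≤ ctil⁻¹ ^ 2) →
            (∀ j, K (j + 1) / K j ≤ 3) ∧
            (∀ j, F (j + 1) ≤ c * E j ^ ((1 : ℝ) / 2) * F j) ∧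
            (E 0 ≤ E₀max → ∀ j, F j ≤ α))) := by
  have hτ₁ : 0 < τ + 1 := by linarith
  refine ⟨KAM.growthConst τ ctil, KAM.growthConst_pos (by linarith),
    min ((KAM.growthConst τ ctil)⁻¹ ^ 2) (KAM.initialThreshold τ τ' ρ₀ ^ 2),
    lt_min (pow_pos (inv_pos.mpr (KAM.growthConst_pos (by linarith))) 2)
      (pow_pos (KAM.initialThreshold_pos hτ₁ hρ₀) 2), ?_⟩
  intro E ρ K r αseq ε F _ _ hErec hρ hKexp hr hαs hε hF
  have h : KAM.Scheme ctil ρ₀ E ρ K := ⟨hctil, hρ₀, hErec,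
    fun j => by rw [hρ, rpow_neg zero_le_two, rpow_natCast, div_eq_mul_inv], hKexp⟩
  obtain rfl : F = KAM.smallness τ τ' α E ρ K := funext fun j => by
    rw [hF, hε, hαs, KAM.smallness, KAM.alpha, rpow_neg zero_le_two]
    norm_cast
    field_simp [(hr j).ne']
  refine ⟨fun j _ => h.K_succ_div_K j, fun hsmall =>
    ⟨fun j => h.K_succ_div_K_le (h.E_le_one (hsmall j)),
      fun j => KAM.smallness_succ_le h hτ₁.le hτ'.le hα.le (hsmall j),
      KAM.smallness_le h hτ₁ hτ'.le hα.le hsmall⟩⟩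

/-- KAM smallness bookkeeping. With ρ_j = ρ₀2^{−j}, e^{−K_jρ_j} = E_j,
E_{j+1} = c̃E_j^{3/2}, α_j = (1−2^{−(j+2)})α, ε_j = E_jα_jr_jρ_j^{τ'} and
F_j = 2^{j+3}K_j^{τ+1}ε_j/r_j: the ratio K_{j+1}/K_j equals
(2 ln c̃ + 3 ln E_j)/ln E_j and (when E_j ≤ c̃⁻² for all j) is at most 3; moreover there
are constants c > 0 and a threshold E₀max > 0 such that F_{j+1} ≤ cE_j^{1/2}F_j and,
if E₀ ≤ E₀max, F_j ≤ α for all j. -/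
theorem stmt18 (τ τ' α ρ₀ ctil : ℝ) (hρ₀ : 0 < ρ₀) (hτ : 0 < τ) (hτ' : 0 < τ')
    (hα : 0 < α) (hα1 : α < 1) (hctil : 1 ≤ ctil) :
    ∃ c > 0, ∃ E₀max > 0,
      ∀ (E ρ K r αseq ε F : ℕ → ℝ),
        (0 < E 0) → (E 0 < 1) →
        (∀ j, E (j + 1) = ctil * E j ^ ((3 : ℝ) / 2)) →
        (∀ j, ρ j = ρ₀ * 2 ^ (-(j : ℝ))) →
        (∀ j, Real.exp (-(K j * ρ j)) = E j) →
        (∀ j, 0 < r j) →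
        (∀ j, αseq j = (1 - 2 ^ (-((j : ℝ) + 2))) * α) →
        (∀ j, ε j = E j * αseq j * r j * ρ j ^ τ') →
        (∀ j, F j = 2 ^ ((j : ℝ) + 3) * K j ^ (τ + 1) * ε j / r j) →
        ((∀ j, E j ≠ 1 →
            K (j + 1) / K j
              = (2 * Real.log ctil + 3 * Real.log (E j)) / Real.log (E j)) ∧
         ((∀ j, E j ≤ ctil⁻¹ ^ 2) →
            (∀ j, K (j + 1) / K j ≤ 3) ∧
            (∀ j, F (j + 1) ≤ c * E j ^ ((1 : ℝ) / 2) * F j) ∧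
            (E 0 ≤ E₀max → ∀ j, F j ≤ α))) :=
  stmt18_general τ τ' α ρ₀ ctil hρ₀ hτ hτ' hα hctil
end
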